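/- arXiv:2407.07802 — 5 statements merged into one kernel-verified Lean document; each statement's English description precedes it below -/
import Mathlib

section
/- Let X ∈ ℝ^{n×d} have full column rank, Y ∈ ℝ^{n×p}, W_0 ∈ ℝ^{d×p}, and let v_1, ..., v_R be the top R right singular vectors of M := Π_X Y - X W_0 where Π_X is the orthogonal projection onto range(X). Then A·B = ((XᵀX)⁻¹XᵀY - W_0) Σ_{i=1}^R v_i v_iᵀ minimizes ‖X(W_0 + AB) - Y‖_F² over all A ∈ ℝ^{d×R}, B ∈ ℝ^{R×p}. -/
open Matrix BigOperators Finset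

/-- Squared Frobenius norm. -/
noncomputable def frob2 {n p : ℕ} (A : Matrix (Fin n) (Fin p) ℝ) : ℝ :=
  ∑ i, ∑ j, (A i j) ^ 2

namespace RRRAux

open RealInnerProductSpace





noncomputable def inner2 {n p : ℕ} (A B : Matrix (Fin n) (Fin p) ℝ) : ℝ :=
  ∑ i, ∑ j, A i j * B i j

lemma inner2_eq_trace {n p : ℕ} (A B : Matrix (Fin n) (Fin p) ℝ) :
    inner2 A B = Matrix.trace (Aᵀ * B) := by
  rw [inner2, Finset.sum_comm]
  simp [Matrix.trace, Matrix.diag, Matrix.mul_apply]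

lemma frob2_add {n p : ℕ} (U V : Matrix (Fin n) (Fin p) ℝ) :
    frob2 (U + V) = frob2 U + frob2 V + 2 * inner2 U V := by
  simp only [frob2, inner2, Matrix.add_apply, Finset.mul_sum, ← Finset.sum_add_distrib]
  exact Finset.sum_congr rfl fun i _ => Finset.sum_congr rfl fun j _ => by ring

lemma frob2_neg {n p : ℕ} (U : Matrix (Fin n) (Fin p) ℝ) : frob2 (-U) = frob2 U := by
  simp [frob2]

lemma dot_sq_sum {p m : ℕ} (v : Fin m → Fin p → ℝ)
    (hv : ∀ i j, v i ⬝ᵥ v j = if i = j then (1 : ℝ) else 0)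
    (a : Fin m → ℝ) (s : Finset (Fin m)) :
    ∑ j : Fin p, (∑ i ∈ s, a i * v i j) ^ 2 = ∑ i ∈ s, (a i) ^ 2 := by
  calc ∑ j : Fin p, (∑ i ∈ s, a i * v i j) ^ 2
      = ∑ j : Fin p, ∑ i ∈ s, ∑ i' ∈ s, (a i * a i') * (v i j * v i' j) := by
        refine Finset.sum_congr rfl fun j _ => ?_
        rw [sq, Finset.sum_mul_sum]
        exact Finset.sum_congr rfl fun i _ => Finset.sum_congr rfl fun i' _ => by ring
    _ = ∑ i ∈ s, ∑ i' ∈ s, (a i * a i') * ∑ j : Fin p, v i j * v i' j := by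
        rw [Finset.sum_comm]
        refine Finset.sum_congr rfl fun i _ => ?_
        rw [Finset.sum_comm]
        exact Finset.sum_congr rfl fun i' _ => (Finset.mul_sum _ _ _).symm
    _ = ∑ i ∈ s, ∑ i' ∈ s, (a i * a i') * (if i = i' then (1:ℝ) else 0) := by
        refine Finset.sum_congr rfl fun i _ => Finset.sum_congr rfl fun i' _ => ?_
        rw [show ∑ j : Fin p, v i j * v i' j = v i ⬝ᵥ v i' from rfl, hv]
    _ = ∑ i ∈ s, (a i) ^ 2 := by
        refine Finset.sum_congr rfl fun i hi => ?_
        simp only [mul_ite, mul_one, mul_zero, Finset.sum_ite_eq, hi, if_true, sq]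



lemma vmv_mul {n p q : ℕ} (a : Fin n → ℝ) (b c : Fin p → ℝ) (d : Fin q → ℝ) :
    vecMulVec a b * vecMulVec c d = (b ⬝ᵥ c) • vecMulVec a d := by
  ext x y
  rw [Matrix.mul_apply, Matrix.smul_apply, vecMulVec_apply, smul_eq_mul, dotProduct,
    Finset.sum_mul]
  exact Finset.sum_congr rfl fun k _ => by rw [vecMulVec_apply, vecMulVec_apply]; ring

lemma mul_vmv {d' p q : ℕ} (C : Matrix (Fin d') (Fin p) ℝ) (a : Fin p → ℝ) (b : Fin q → ℝ) :
    C * vecMulVec a b = vecMulVec (C *ᵥ a) b := by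
  ext x y
  rw [Matrix.mul_apply, vecMulVec_apply, mulVec, dotProduct, Finset.sum_mul]
  exact Finset.sum_congr rfl fun k _ => by rw [vecMulVec_apply]; ring

lemma card_filter_lt {m R : ℕ} (hR : R ≤ m) :
    (univ.filter (fun s : Fin m => s.val < R)).card = R := by
  have h : univ.filter (fun s : Fin m => s.val < R) = Finset.map (Fin.castLEEmb hR) univ := by
    ext s
    simp only [mem_filter, mem_univ, true_and, Finset.mem_map, Fin.castLEEmb, Fin.castLE,
      Function.Embedding.coeFn_mk]
    constructor
    · intro hs; exact ⟨⟨s.val, hs⟩, by simp⟩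
    · rintro ⟨i, rfl⟩; exact i.2
  rw [h, Finset.card_map, Finset.card_univ, Fintype.card_fin]

lemma comb {m R : ℕ} (σ t : Fin m → ℝ) (hσ0 : ∀ i, 0 ≤ σ i)
    (hσdec : ∀ i j : Fin m, i ≤ j → σ j ≤ σ i)
    (ht0 : ∀ i, 0 ≤ t i) (ht1 : ∀ i, t i ≤ 1) (hts : ∑ i, t i ≤ (R : ℝ)) :
    ∑ i, σ i ^ 2 * t i ≤ ∑ i ∈ univ.filter (fun i : Fin m => i.val < R), σ i ^ 2 := by
  by_cases hmR : m ≤ R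
  · rw [Finset.filter_true_of_mem (fun s _ => lt_of_lt_of_le s.2 hmR)]
    exact Finset.sum_le_sum fun s _ => mul_le_of_le_one_right (sq_nonneg _) (ht1 s)
  · push_neg at hmR
    set r : Fin m := ⟨R, hmR⟩ with hr
    set lt := univ.filter (fun s : Fin m => s.val < R) with hlt
    set nlt := univ.filter (fun s : Fin m => ¬ s.val < R) with hnlt
    have hsplit : ∀ f : Fin m → ℝ, ∑ s ∈ lt, f s + ∑ s ∈ nlt, f s = ∑ s, f s :=
      fun f => Finset.sum_filter_add_sum_filter_not univ _ f
    have hcard : (lt.card : ℝ) = (R : ℝ) := by rw [hlt, card_filter_lt hmR.le]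
    have e4 : ∑ s ∈ nlt, σ s ^ 2 * t s ≤ σ r ^ 2 * ∑ s ∈ nlt, t s := by
      rw [Finset.mul_sum]
      refine Finset.sum_le_sum fun s hs => ?_
      have hrs : r ≤ s := by
        have := (Finset.mem_filter.mp hs).2
        exact Fin.mk_le_of_le_val (le_of_not_gt this)
      exact mul_le_mul_of_nonneg_right
        (pow_le_pow_left₀ (hσ0 s) (hσdec r s hrs) 2) (ht0 s)
    have e5 : ∑ s ∈ nlt, t s ≤ (R : ℝ) - ∑ s ∈ lt, t s := by
      have := hsplit t; linarith
    have e6 : σ r ^ 2 * ∑ s ∈ nlt, t s ≤ σ r ^ 2 * ((R:ℝ) - ∑ s ∈ lt, t s) :=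
      mul_le_mul_of_nonneg_left e5 (sq_nonneg _)
    have e1 : σ r ^ 2 * ((R:ℝ) - ∑ s ∈ lt, t s) = ∑ s ∈ lt, σ r ^ 2 * (1 - t s) := by
      simp_rw [mul_sub, mul_one]
      rw [Finset.sum_sub_distrib, ← Finset.mul_sum, Finset.sum_const, nsmul_eq_mul, hcard]; ring
    have e2 : ∑ s ∈ lt, σ r ^ 2 * (1 - t s) ≤ ∑ s ∈ lt, σ s ^ 2 * (1 - t s) := by
      refine Finset.sum_le_sum fun s hs => ?_
      have hsr : s ≤ r := by
        have := (Finset.mem_filter.mp hs).2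
        exact le_of_lt (by exact this : s.val < r.val)
      exact mul_le_mul_of_nonneg_right
        (pow_le_pow_left₀ (hσ0 r) (hσdec s r hsr) 2) (by linarith [ht1 s])
    have e3 : ∑ s ∈ lt, σ s ^ 2 * t s + ∑ s ∈ lt, σ s ^ 2 * (1 - t s) = ∑ s ∈ lt, σ s ^ 2 := by
      rw [← Finset.sum_add_distrib]
      exact Finset.sum_congr rfl fun s _ => by ring
    have := hsplit (fun s => σ s ^ 2 * t s)
    linarith



lemma exists_ortho {F : Type*} [NormedAddCommGroup F] [InnerProductSpace ℝ F] {R : ℕ}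
    (f : Fin R → F) :
    ∃ (m : ℕ) (e : Fin m → F), m ≤ R ∧ Orthonormal ℝ e ∧
      ∀ x ∈ Submodule.span ℝ (Set.range f), ∃ c : Fin m → ℝ, x = ∑ k, c k • e k := by
  classical
  set K := Submodule.span ℝ (Set.range f) with hK
  have hfd : FiniteDimensional ℝ K := FiniteDimensional.span_of_finite ℝ (Set.finite_range f)
  set b := stdOrthonormalBasis ℝ K with hb
  refine ⟨Module.finrank ℝ K, fun k => (b k : F), ?_, ?_, ?_⟩
  · calc Module.finrank ℝ K ≤ (Set.range f).toFinset.card := finrank_span_le_card _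
      _ ≤ Fintype.card (Fin R) := by
          rw [Set.toFinset_card]; exact Fintype.card_range_le f
      _ = R := Fintype.card_fin R
  · have hob := b.orthonormal
    rw [orthonormal_iff_ite] at hob ⊢
    intro i j
    rw [← Submodule.coe_inner]
    exact hob i j
  · intro x hx
    refine ⟨fun k => b.repr ⟨x, hx⟩ k, ?_⟩
    have h := b.sum_repr ⟨x, hx⟩
    calc x = ((⟨x, hx⟩ : K) : F) := rfl
      _ = ((∑ k, b.repr ⟨x, hx⟩ k • b k : K) : F) := by rw [h]
      _ = ∑ k, b.repr ⟨x, hx⟩ k • (b k : F) := by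
          rw [Submodule.coe_sum]
          exact Finset.sum_congr rfl fun k _ => rfl

lemma proj_bound {F : Type*} [NormedAddCommGroup F] [InnerProductSpace ℝ F] {m : ℕ}
    {e : Fin m → F} (he : Orthonormal ℝ e) (c : Fin m → ℝ) (y : F) :
    ‖y‖ ^ 2 - ∑ k, ⟪e k, y⟫ ^ 2 ≤ ‖y - ∑ k, c k • e k‖ ^ 2 := by
  classical
  set d : Fin m → ℝ := fun k => ⟪e k, y⟫ with hd
  have hee := orthonormal_iff_ite.mp he
  set z : F := ∑ k, c k • e k with hz
  have hzz : ⟪z, z⟫ = ∑ k, (c k) ^ 2 := by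
    rw [hz, inner_sum]
    simp_rw [real_inner_smul_right, sum_inner, real_inner_smul_left, hee]
    simp [Finset.sum_ite_eq', sq, mul_comm]
  have hyz : ⟪y, z⟫ = ∑ k, c k * d k := by
    rw [hz, inner_sum]
    simp_rw [real_inner_smul_right]
    exact Finset.sum_congr rfl fun k _ => by rw [real_inner_comm]
  have hnz : ‖z‖ ^ 2 = ∑ k, (c k) ^ 2 := by rw [← real_inner_self_eq_norm_sq, hzz]
  have hpos : (0:ℝ) ≤ ∑ k, (c k - d k) ^ 2 := Finset.sum_nonneg fun k _ => sq_nonneg _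
  have hexp : ∑ k, (c k - d k) ^ 2
      = (∑ k, (c k)^2 + ∑ k, (d k)^2) - 2 * ∑ k, c k * d k := by
    rw [← Finset.sum_add_distrib, Finset.mul_sum, ← Finset.sum_sub_distrib]
    exact Finset.sum_congr rfl fun k _ => by ring
  have hns := norm_sub_sq_real y z
  rw [hns, hyz, hnz]
  linarith

lemma frob2_sum {n p m : ℕ} (σ : Fin m → ℝ) (u : Fin m → Fin n → ℝ) (v : Fin m → Fin p → ℝ)
    (hu : ∀ i j, u i ⬝ᵥ u j = if i = j then (1:ℝ) else 0)
    (hv : ∀ i j, v i ⬝ᵥ v j = if i = j then (1:ℝ) else 0)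
    (s : Finset (Fin m)) :
    frob2 (∑ i ∈ s, σ i • vecMulVec (u i) (v i)) = ∑ i ∈ s, σ i ^ 2 := by
  have hent : ∀ a b, (∑ i ∈ s, σ i • vecMulVec (u i) (v i)) a b
      = ∑ i ∈ s, (σ i * u i a) * v i b := by
    intro a b
    rw [Matrix.sum_apply]
    exact Finset.sum_congr rfl fun i _ => by
      rw [Matrix.smul_apply, vecMulVec_apply, smul_eq_mul]; ring
  have h1 : ∀ a : Fin n, ∑ b, ((∑ i ∈ s, σ i • vecMulVec (u i) (v i)) a b) ^ 2
      = ∑ i ∈ s, (σ i * u i a) ^ 2 := by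
    intro a
    simp_rw [hent a]
    exact dot_sq_sum v hv (fun i => σ i * u i a) s
  unfold frob2
  simp_rw [h1]
  rw [Finset.sum_comm]
  refine Finset.sum_congr rfl fun i _ => ?_
  have h2 : ∑ a, (σ i * u i a) ^ 2 = σ i ^ 2 * (u i ⬝ᵥ u i) := by
    rw [dotProduct, Finset.mul_sum]
    exact Finset.sum_congr rfl fun a _ => by ring
  rw [h2, hu, if_pos rfl, mul_one]

lemma eckart_young {n p R m : ℕ} (σ : Fin m → ℝ) (u : Fin m → Fin n → ℝ) (v : Fin m → Fin p → ℝ)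
    (hσ0 : ∀ i, 0 ≤ σ i) (hσdec : ∀ i j : Fin m, i ≤ j → σ j ≤ σ i)
    (hu : ∀ i j, u i ⬝ᵥ u j = if i = j then (1:ℝ) else 0)
    (hv : ∀ i j, v i ⬝ᵥ v j = if i = j then (1:ℝ) else 0)
    (A : Matrix (Fin n) (Fin R) ℝ) (B : Matrix (Fin R) (Fin p) ℝ) :
    ∑ i ∈ univ.filter (fun i : Fin m => ¬ i.val < R), σ i ^ 2 ≤
      frob2 (A * B - ∑ i, σ i • vecMulVec (u i) (v i)) := by
  classical
  set M := ∑ i, σ i • vecMulVec (u i) (v i) with hM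
  have hMent : ∀ a b, M a b = ∑ s, (σ s * u s a) * v s b := by
    intro a b
    rw [hM, Matrix.sum_apply]
    exact Finset.sum_congr rfl fun s _ => by
      rw [Matrix.smul_apply, vecMulVec_apply, smul_eq_mul]; ring
  have hinner : ∀ x y : EuclideanSpace ℝ (Fin n), ⟪x, y⟫ = ∑ i, x i * y i := by
    intro x y
    rw [PiLp.inner_apply]
    simp [RCLike.inner_apply]
    exact Finset.sum_congr rfl fun i _ => mul_comm _ _
  have hnormE : ∀ x : EuclideanSpace ℝ (Fin n), ‖x‖ ^ 2 = ∑ i, x i * x i := fun x => by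
    rw [← real_inner_self_eq_norm_sq, hinner]
  set colA : Fin R → EuclideanSpace ℝ (Fin n) := fun r => WithLp.toLp 2 (fun i => A i r) with hcolA
  set L : EuclideanSpace ℝ (Fin n) ≃ₗ[ℝ] (Fin n → ℝ) :=
    WithLp.linearEquiv 2 ℝ (Fin n → ℝ) with hLdef
  have hcol : ∀ j, WithLp.toLp 2 (fun i => (A * B) i j : Fin n → ℝ) = ∑ r, B r j • colA r := by
    intro j
    apply L.injective
    rw [map_sum]
    simp only [_root_.map_smul]
    funext i
    rw [Finset.sum_apply]
    simp only [Pi.smul_apply, smul_eq_mul]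
    rw [show (L (WithLp.toLp 2 (fun i => (A * B) i j : Fin n → ℝ))) i = (A * B) i j from rfl,
      Matrix.mul_apply]
    exact Finset.sum_congr rfl fun r _ => mul_comm _ _
  obtain ⟨m', e, hm', he, hrep⟩ := exists_ortho colA
  have hmem : ∀ j, WithLp.toLp 2 (fun i => (A * B) i j : Fin n → ℝ) ∈
      Submodule.span ℝ (Set.range colA) := by
    intro j; rw [hcol j]
    exact Submodule.sum_mem _ fun r _ =>
      Submodule.smul_mem _ _ (Submodule.subset_span ⟨r, rfl⟩)
  choose c hc using fun j => hrep _ (hmem j)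
  set colM : Fin p → EuclideanSpace ℝ (Fin n) := fun j => WithLp.toLp 2 (fun i => M i j) with hcolM
  set uE : Fin m → EuclideanSpace ℝ (Fin n) := fun s => WithLp.toLp 2 (fun i => u s i) with huEdef
  have hcolbound : ∀ j, ‖colM j‖ ^ 2 - ∑ k, ⟪e k, colM j⟫ ^ 2
      ≤ ∑ i, ((A * B) i j - M i j) ^ 2 := by
    intro j
    have h := proj_bound he (c j) (colM j)
    rw [← hc j] at h
    refine le_trans h (le_of_eq ?_)
    rw [hnormE]
    refine Finset.sum_congr rfl fun i _ => ?_
    show (M i j - (A * B) i j) * (M i j - (A * B) i j) = _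
    ring
  have hfrob : frob2 (A * B - M) = ∑ j, ∑ i, ((A * B) i j - M i j) ^ 2 := by
    unfold frob2; rw [Finset.sum_comm]; simp only [Matrix.sub_apply]
  have hMnorm : ∑ j, ‖colM j‖ ^ 2 = ∑ s, σ s ^ 2 := by
    have h0 : ∀ j, ‖colM j‖ ^ 2 = ∑ i, M i j ^ 2 := by
      intro j
      rw [hnormE]
      exact Finset.sum_congr rfl fun i _ => (pow_two _).symm
    simp_rw [h0]
    rw [Finset.sum_comm]
    rw [show (∑ i, ∑ j, M i j ^ 2) = frob2 M from rfl, hM,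
      frob2_sum σ u v hu hv univ]
  have hinner_ek : ∀ (k : Fin m') j,
      ⟪e k, colM j⟫ = ∑ s, (σ s * ((fun i => e k i) ⬝ᵥ u s)) * v s j := by
    intro k j
    rw [hinner]
    calc ∑ i, e k i * colM j i = ∑ i, ∑ s, e k i * ((σ s * u s i) * v s j) := by
          refine Finset.sum_congr rfl fun i _ => ?_
          rw [show colM j i = M i j from rfl, hMent, Finset.mul_sum]
      _ = ∑ s, ∑ i, e k i * ((σ s * u s i) * v s j) := Finset.sum_comm
      _ = ∑ s, (σ s * ((fun i => e k i) ⬝ᵥ u s)) * v s j := by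
          refine Finset.sum_congr rfl fun s _ => ?_
          rw [dotProduct, Finset.mul_sum, Finset.sum_mul]
          exact Finset.sum_congr rfl fun i _ => by ring
  have hsq : ∀ k : Fin m', ∑ j, ⟪e k, colM j⟫ ^ 2
      = ∑ s, σ s ^ 2 * ((fun i => e k i) ⬝ᵥ u s) ^ 2 := by
    intro k
    simp_rw [hinner_ek k]
    rw [dot_sq_sum v hv (fun s => σ s * ((fun i => e k i) ⬝ᵥ u s)) univ]
    exact Finset.sum_congr rfl fun s _ => by rw [mul_pow]
  set t : Fin m → ℝ := fun s => ∑ k, ((fun i => e k i) ⬝ᵥ u s) ^ 2 with htdef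
  have huE : Orthonormal ℝ uE := by
    rw [orthonormal_iff_ite]
    intro i j
    rw [hinner]
    exact hu i j
  have hnorm_uE : ∀ s, ‖uE s‖ ^ 2 = 1 := by
    intro s
    rw [hnormE, show (∑ i, uE s i * uE s i) = u s ⬝ᵥ u s from rfl, hu s s, if_pos rfl]
  have ht0 : ∀ s, 0 ≤ t s := fun s => Finset.sum_nonneg fun k _ => sq_nonneg _
  have ht1 : ∀ s, t s ≤ 1 := by
    intro s
    calc t s = ∑ k, ‖⟪e k, uE s⟫‖ ^ 2 := by
          refine Finset.sum_congr rfl fun k _ => ?_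
          rw [Real.norm_eq_abs, sq_abs, hinner]
          rfl
      _ ≤ ‖uE s‖ ^ 2 := he.sum_inner_products_le _
      _ = 1 := hnorm_uE s
  have hts : ∑ s, t s ≤ (R : ℝ) := by
    have h1 : ∀ k : Fin m', ∑ s, ((fun i => e k i) ⬝ᵥ u s) ^ 2 ≤ 1 := by
      intro k
      calc ∑ s, ((fun i => e k i) ⬝ᵥ u s) ^ 2 = ∑ s, ‖⟪uE s, e k⟫‖ ^ 2 := by
            refine Finset.sum_congr rfl fun s _ => ?_
            rw [Real.norm_eq_abs, sq_abs, hinner, dotProduct]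
            congr 1
            exact Finset.sum_congr rfl fun i _ => mul_comm _ _
        _ ≤ ‖e k‖ ^ 2 := huE.sum_inner_products_le _
        _ = 1 := by rw [he.1 k, one_pow]
    calc ∑ s, t s = ∑ k : Fin m', ∑ s, ((fun i => e k i) ⬝ᵥ u s) ^ 2 := Finset.sum_comm
      _ ≤ ∑ _k : Fin m', (1:ℝ) := Finset.sum_le_sum fun k _ => h1 k
      _ = m' := by simp
      _ ≤ R := by exact_mod_cast hm'
  have hcomb := comb σ t hσ0 hσdec ht0 ht1 hts
  have hswap : ∑ s, σ s ^ 2 * t s = ∑ j, ∑ k, ⟪e k, colM j⟫ ^ 2 := by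
    calc ∑ s, σ s ^ 2 * t s
        = ∑ s, ∑ k : Fin m', σ s ^ 2 * ((fun i => e k i) ⬝ᵥ u s) ^ 2 := by
          refine Finset.sum_congr rfl fun s _ => ?_
          rw [htdef]; exact Finset.mul_sum _ _ _
      _ = ∑ k : Fin m', ∑ s, σ s ^ 2 * ((fun i => e k i) ⬝ᵥ u s) ^ 2 := Finset.sum_comm
      _ = ∑ k : Fin m', ∑ j, ⟪e k, colM j⟫ ^ 2 :=
          Finset.sum_congr rfl fun k _ => (hsq k).symm
      _ = ∑ j, ∑ k, ⟪e k, colM j⟫ ^ 2 := Finset.sum_comm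
  have hchain : ∑ s, σ s ^ 2 - ∑ s, σ s ^ 2 * t s ≤ frob2 (A * B - M) := by
    rw [hfrob, ← hMnorm, hswap, ← Finset.sum_sub_distrib]
    exact Finset.sum_le_sum fun j _ => hcolbound j
  have hsplit := Finset.sum_filter_add_sum_filter_not univ
    (fun i : Fin m => i.val < R) (fun i => σ i ^ 2)
  linarith


end RRRAux

open RRRAux

/-- Closed-form solution of the reduced rank regression problem:
with `v₁, ..., v_R` the top right singular vectors of `M := Π_X Y - X W₀`,
the rank-`R` update `A·B = ((XᵀX)⁻¹XᵀY - W₀) ∑_{i ≤ R} vᵢvᵢᵀ` minimizes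
`‖X(W₀ + AB) - Y‖_F²` over all `A : d × R`, `B : R × p`. -/
theorem reduced_rank_regression_solution {n d p R : ℕ}
    (X : Matrix (Fin n) (Fin d) ℝ) (hX : X.rank = d)
    (Y : Matrix (Fin n) (Fin p) ℝ) (W₀ : Matrix (Fin d) (Fin p) ℝ)
    (σ : Fin (min d p) → ℝ)
    (u : Fin (min d p) → Fin n → ℝ) (v : Fin (min d p) → Fin p → ℝ)
    (hσ0 : ∀ i, 0 ≤ σ i) (hσdec : ∀ i j : Fin (min d p), i ≤ j → σ j ≤ σ i)
    (hu : ∀ i j, u i ⬝ᵥ u j = if i = j then (1 : ℝ) else 0)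
    (hv : ∀ i j, v i ⬝ᵥ v j = if i = j then (1 : ℝ) else 0)
    (hM : X * (Xᵀ * X)⁻¹ * Xᵀ * Y - X * W₀ = ∑ i, σ i • vecMulVec (u i) (v i)) :
    ∃ A : Matrix (Fin d) (Fin R) ℝ, ∃ B : Matrix (Fin R) (Fin p) ℝ,
      A * B = ((Xᵀ * X)⁻¹ * Xᵀ * Y - W₀) *
          ∑ i ∈ univ.filter (fun i : Fin (min d p) => i.val < R),
            vecMulVec (v i) (v i) ∧
      ∀ (A' : Matrix (Fin d) (Fin R) ℝ) (B' : Matrix (Fin R) (Fin p) ℝ),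
        frob2 (X * (W₀ + A * B) - Y) ≤ frob2 (X * (W₀ + A' * B') - Y) := by
  classical
  -- invertibility of XᵀX
  have hrk : (Xᵀ * X).rank = d := by rw [Matrix.rank_transpose_mul_self, hX]
  have hunit : IsUnit (Xᵀ * X) := by
    rw [← Matrix.mulVec_surjective_iff_isUnit]
    have htop : LinearMap.range (Xᵀ * X).mulVecLin = ⊤ := by
      apply Submodule.eq_top_of_finrank_eq
      rw [show Module.finrank ℝ (LinearMap.range (Xᵀ * X).mulVecLin) = (Xᵀ * X).rank from rfl,
        hrk, Module.finrank_fintype_fun_eq_card, Fintype.card_fin]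
    intro y
    obtain ⟨x, hx⟩ := (LinearMap.range_eq_top.mp htop) y
    exact ⟨x, hx⟩
  have hdet : IsUnit (Xᵀ * X).det := (Matrix.isUnit_iff_isUnit_det _).mp hunit
  have hinv1 : (Xᵀ * X) * (Xᵀ * X)⁻¹ = 1 := Matrix.mul_nonsing_inv _ hdet
  set Msum := ∑ i, σ i • vecMulVec (u i) (v i) with hMsum
  set N := X * (Xᵀ * X)⁻¹ * Xᵀ * Y with hN
  -- hM : N - X * W₀ = Msum
  have hXtN : Xᵀ * (N - Y) = 0 := by
    have h1 : Xᵀ * N = Xᵀ * Y := by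
      rw [hN]
      calc Xᵀ * (X * (Xᵀ * X)⁻¹ * Xᵀ * Y) = (Xᵀ * X) * (Xᵀ * X)⁻¹ * (Xᵀ * Y) := by
            simp only [Matrix.mul_assoc]
        _ = Xᵀ * Y := by rw [hinv1, Matrix.one_mul]
    rw [Matrix.mul_sub, h1, sub_self]
  have hcross : ∀ Z : Matrix (Fin d) (Fin p) ℝ, inner2 (X * Z) (N - Y) = 0 := by
    intro Z
    rw [inner2_eq_trace, Matrix.transpose_mul, Matrix.mul_assoc, hXtN,
      Matrix.mul_zero, Matrix.trace_zero]
  have hfrobdec : ∀ Z : Matrix (Fin d) (Fin p) ℝ,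
      frob2 (X * (W₀ + Z) - Y) = frob2 (X * Z - Msum) + frob2 (N - Y) := by
    intro Z
    have h1 : X * (W₀ + Z) - Y = (X * Z - Msum) + (N - Y) := by
      rw [← hM, Matrix.mul_add]; abel
    have h2 : X * Z - Msum = X * (Z + W₀ - (Xᵀ * X)⁻¹ * (Xᵀ * Y)) := by
      rw [← hM]
      simp only [Matrix.mul_add, Matrix.mul_sub, Matrix.mul_assoc, hN]
      abel
    rw [h1, frob2_add, h2, hcross, mul_zero, add_zero]
  -- the candidate
  set C := (Xᵀ * X)⁻¹ * Xᵀ * Y - W₀ with hC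
  set P := ∑ i ∈ univ.filter (fun i : Fin (min d p) => i.val < R),
      vecMulVec (v i) (v i) with hP
  have hXC : X * C = Msum := by
    rw [hC, ← hM, Matrix.mul_sub, hN]
    simp only [Matrix.mul_assoc]
  have hCP : C * P = ∑ i ∈ univ.filter (fun i : Fin (min d p) => i.val < R),
      vecMulVec (C *ᵥ v i) (v i) := by
    rw [hP, Matrix.mul_sum]
    exact Finset.sum_congr rfl fun i _ => mul_vmv C (v i) (v i)
  -- construct A₀ B₀
  set A₀ : Matrix (Fin d) (Fin R) ℝ :=
    fun x r => if h : (r : ℕ) < min d p then (C *ᵥ v ⟨r, h⟩) x else 0 with hA₀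
  set B₀ : Matrix (Fin R) (Fin p) ℝ :=
    fun r j => if h : (r : ℕ) < min d p then v ⟨r, h⟩ j else 0 with hB₀
  have hAB : A₀ * B₀ = C * P := by
    rw [hCP]
    ext x j
    rw [Matrix.mul_apply, Matrix.sum_apply,
      ← Finset.sum_filter_add_sum_filter_not univ (fun r : Fin R => (r : ℕ) < min d p)]
    have hz : ∑ r ∈ univ.filter (fun r : Fin R => ¬ (r : ℕ) < min d p),
        A₀ x r * B₀ r j = 0 := by
      refine Finset.sum_eq_zero fun r hr => ?_
      have hnr := (Finset.mem_filter.mp hr).2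
      rw [hA₀, hB₀]
      simp only [dif_neg hnr]
      ring
    rw [hz, add_zero]
    refine Finset.sum_bij' (fun (r : Fin R) (hr : r ∈ _) =>
        (⟨(r : ℕ), (Finset.mem_filter.mp hr).2⟩ : Fin (min d p)))
      (fun (i : Fin (min d p)) (hi : i ∈ _) =>
        (⟨(i : ℕ), (Finset.mem_filter.mp hi).2⟩ : Fin R)) ?_ ?_ ?_ ?_ ?_
    · intro a ha
      simp only [Finset.mem_filter, Finset.mem_univ, true_and]
      exact a.2
    · intro a ha
      simp only [Finset.mem_filter, Finset.mem_univ, true_and]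
      exact a.2
    · intro a ha; exact Fin.ext rfl
    · intro a ha; exact Fin.ext rfl
    · intro r hr
      have h := (Finset.mem_filter.mp hr).2
      rw [hA₀, hB₀]
      simp only [dif_pos h]
      rw [vecMulVec_apply]
  -- value of the candidate
  have hMP : Msum * P = ∑ i ∈ univ.filter (fun i : Fin (min d p) => i.val < R),
      σ i • vecMulVec (u i) (v i) := by
    rw [hMsum, hP, Matrix.sum_mul]
    simp_rw [Matrix.mul_sum]
    have h1 : ∀ s : Fin (min d p),
        ∑ i ∈ univ.filter (fun i : Fin (min d p) => i.val < R),
          (σ s • vecMulVec (u s) (v s)) * vecMulVec (v i) (v i)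
        = if s ∈ univ.filter (fun i : Fin (min d p) => i.val < R) then
            σ s • vecMulVec (u s) (v s) else 0 := by
      intro s
      have h2 : ∀ i, (σ s • vecMulVec (u s) (v s)) * vecMulVec (v i) (v i)
          = if s = i then σ s • vecMulVec (u s) (v i) else 0 := by
        intro i
        rw [Matrix.smul_mul, vmv_mul, hv]
        by_cases hsi : s = i
        · rw [if_pos hsi, if_pos hsi, one_smul]
        · rw [if_neg hsi, if_neg hsi, zero_smul, smul_zero]
      simp_rw [h2]
      rw [Finset.sum_ite_eq]
    simp_rw [h1]
    rw [Finset.sum_ite_mem, Finset.univ_inter]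
  have hval : frob2 (X * (A₀ * B₀) - Msum)
      = ∑ i ∈ univ.filter (fun i : Fin (min d p) => ¬ i.val < R), σ i ^ 2 := by
    have h1 : X * (A₀ * B₀) = Msum * P := by
      rw [hAB, ← Matrix.mul_assoc, hXC]
    have h2 : Msum * P - Msum
        = -(∑ i ∈ univ.filter (fun i : Fin (min d p) => ¬ i.val < R),
            σ i • vecMulVec (u i) (v i)) := by
      rw [hMP]
      rw [hMsum]
      rw [← Finset.sum_filter_add_sum_filter_not univ (fun i : Fin (min d p) => i.val < R)
        (fun i => σ i • vecMulVec (u i) (v i))]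
      abel
    rw [h1, h2, frob2_neg, frob2_sum σ u v hu hv]
  refine ⟨A₀, B₀, hAB, fun A' B' => ?_⟩
  have hlow := eckart_young σ u v hσ0 hσdec hu hv (X * A') B'
  rw [Matrix.mul_assoc] at hlow
  rw [hfrobdec (A₀ * B₀), hfrobdec (A' * B'), hval]
  have : (∑ i ∈ univ.filter (fun i : Fin (min d p) => ¬ i.val < R), σ i ^ 2)
      ≤ frob2 (X * (A' * B') - Msum) := hlow
  linarith
end

section
/- Under the same setup as the reduced rank regression solution, the minimal value of ‖X(W_0 + AB) - Y‖_F² over rank-R updates AB equals ‖Π_X Y - Y‖_F² + Σ_{i=R+1}^{min(d,p)} σ_i(Π_X Y - X W_0)². -/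
open Matrix BigOperators Finset

namespace RRR

noncomputable def ipF {n p : ℕ} (A B : Matrix (Fin n) (Fin p) ℝ) : ℝ := ∑ i, ∑ j, A i j * B i j


lemma frob2_eq_ipF {n p : ℕ} (A : Matrix (Fin n) (Fin p) ℝ) : frob2 A = ipF A A := by
  simp [frob2, ipF, sq]

lemma frob2_add {n p : ℕ} (A B : Matrix (Fin n) (Fin p) ℝ) :
    frob2 (A + B) = frob2 A + 2 * ipF A B + frob2 B := by
  simp only [frob2, ipF, Matrix.add_apply, Finset.mul_sum, ← Finset.sum_add_distrib]
  refine Finset.sum_congr rfl fun i _ => Finset.sum_congr rfl fun j _ => by ring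

lemma frob2_neg {n p : ℕ} (A : Matrix (Fin n) (Fin p) ℝ) : frob2 (-A) = frob2 A := by
  simp [frob2]

lemma ipF_eq_trace {n p : ℕ} (A B : Matrix (Fin n) (Fin p) ℝ) :
    ipF A B = Matrix.trace (Aᵀ * B) := by
  simp only [ipF, Matrix.trace, Matrix.mul_apply, Matrix.diag, Matrix.transpose_apply]
  exact Finset.sum_comm

lemma ipF_mul_left {n p q : ℕ} (P : Matrix (Fin n) (Fin q) ℝ) (C : Matrix (Fin q) (Fin p) ℝ)
    (D : Matrix (Fin n) (Fin p) ℝ) : ipF (P * C) D = ipF C (Pᵀ * D) := by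
  rw [ipF_eq_trace, ipF_eq_trace, Matrix.transpose_mul, Matrix.mul_assoc]

lemma ipF_zero_right {n p : ℕ} (A : Matrix (Fin n) (Fin p) ℝ) : ipF A 0 = 0 := by
  simp [ipF]

lemma frob2_nonneg {n p : ℕ} (A : Matrix (Fin n) (Fin p) ℝ) : 0 ≤ frob2 A := by
  apply Finset.sum_nonneg; intro i _; apply Finset.sum_nonneg; intro j _; positivity

lemma sum_sq_orth {p m : ℕ} (v : Fin m → Fin p → ℝ)
    (hv : ∀ i j, v i ⬝ᵥ v j = if i = j then (1 : ℝ) else 0) (a : Fin m → ℝ) :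
    ∑ j, (∑ i, a i * v i j) ^ 2 = ∑ i, (a i) ^ 2 := by
  have : ∀ j : Fin p, (∑ i, a i * v i j) ^ 2 = ∑ i, ∑ i', (a i * v i j) * (a i' * v i' j) := by
    intro j; rw [sq, Finset.sum_mul_sum]
  rw [Finset.sum_congr rfl fun j _ => this j]
  rw [Finset.sum_comm]
  refine Finset.sum_congr rfl fun i _ => ?_
  rw [Finset.sum_comm]
  have : ∀ i' : Fin m, ∑ j, a i * v i j * (a i' * v i' j) = (a i * a i') * (v i ⬝ᵥ v i') := by
    intro i'; rw [dotProduct, Finset.mul_sum]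
    exact Finset.sum_congr rfl fun j _ => by ring
  rw [Finset.sum_congr rfl fun i' _ => this i']
  simp only [hv]
  simp only [mul_ite, mul_one, mul_zero]
  rw [Finset.sum_ite_eq univ i fun x => a i * a x]
  simp [sq]

lemma dot_sum_right {n m : ℕ} (y : Fin n → ℝ) (f : Fin m → Fin n → ℝ) :
    y ⬝ᵥ (∑ t, f t) = ∑ t, y ⬝ᵥ f t := by
  simp only [dotProduct, Finset.sum_apply, Finset.mul_sum]
  exact Finset.sum_comm

lemma dot_sum_left {n m : ℕ} (y : Fin n → ℝ) (f : Fin m → Fin n → ℝ) :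
    (∑ t, f t) ⬝ᵥ y = ∑ t, f t ⬝ᵥ y := by
  rw [dotProduct_comm, dot_sum_right]
  exact Finset.sum_congr rfl fun t _ => dotProduct_comm _ _

lemma expand_quad {n m : ℕ} (w : Fin m → Fin n → ℝ)
    (hw : ∀ k l, w k ⬝ᵥ w l = if k = l then (1 : ℝ) else 0) (y : Fin n → ℝ) (r : Fin m → ℝ) :
    (y - ∑ t, r t • w t) ⬝ᵥ (y - ∑ t, r t • w t)
      = y ⬝ᵥ y - 2 * ∑ k, r k * (w k ⬝ᵥ y) + ∑ k, (r k) ^ 2 := by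
  have hq : (∑ t, r t • w t) ⬝ᵥ (∑ t, r t • w t) = ∑ k, (r k) ^ 2 := by
    rw [dot_sum_left]
    rw [Finset.sum_congr rfl fun k (_ : k ∈ univ) =>
      (by rw [smul_dotProduct, dot_sum_right] :
        (r k • w k) ⬝ᵥ (∑ t, r t • w t) = r k • ∑ t, (w k) ⬝ᵥ (r t • w t))]
    simp only [dotProduct_smul, smul_eq_mul, hw]
    refine Finset.sum_congr rfl fun k _ => ?_
    simp only [mul_ite, mul_one, mul_zero, smul_eq_mul, Finset.mul_sum]
    rw [Finset.sum_ite_eq univ k fun l => r k * r l]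
    simp [sq]
  have hyq : y ⬝ᵥ (∑ t, r t • w t) = ∑ k, r k * (w k ⬝ᵥ y) := by
    rw [dot_sum_right]
    simp only [dotProduct_smul, smul_eq_mul]
    exact Finset.sum_congr rfl fun k _ => by rw [dotProduct_comm]
  have hqy : (∑ t, r t • w t) ⬝ᵥ y = ∑ k, r k * (w k ⬝ᵥ y) := by
    rw [dotProduct_comm]; exact hyq
  rw [sub_dotProduct, dotProduct_sub, dotProduct_sub, hq, hyq, hqy]
  ring

lemma dotProduct_self_nonneg' {n : ℕ} (y : Fin n → ℝ) : 0 ≤ y ⬝ᵥ y :=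
  Finset.sum_nonneg fun i _ => mul_self_nonneg _

lemma bessel {n m : ℕ} (w : Fin m → Fin n → ℝ)
    (hw : ∀ k l, w k ⬝ᵥ w l = if k = l then (1 : ℝ) else 0) (y : Fin n → ℝ) :
    ∑ k, (w k ⬝ᵥ y) ^ 2 ≤ y ⬝ᵥ y := by
  have h := expand_quad w hw y (fun k => w k ⬝ᵥ y)
  have h0 := dotProduct_self_nonneg' (y - ∑ t, (fun k => w k ⬝ᵥ y) t • w t)
  have e : ∑ k, (w k ⬝ᵥ y) * (w k ⬝ᵥ y) = ∑ k, (w k ⬝ᵥ y)^2 :=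
    Finset.sum_congr rfl fun k _ => (sq _).symm
  rw [h, e] at h0
  linarith

lemma dist_sq_ge {n m : ℕ} (w : Fin m → Fin n → ℝ)
    (hw : ∀ k l, w k ⬝ᵥ w l = if k = l then (1 : ℝ) else 0) (y : Fin n → ℝ) (r : Fin m → ℝ) :
    y ⬝ᵥ y - ∑ k, (w k ⬝ᵥ y) ^ 2 ≤ (y - ∑ t, r t • w t) ⬝ᵥ (y - ∑ t, r t • w t) := by
  rw [expand_quad w hw y r]
  have : (0:ℝ) ≤ ∑ k, ((w k ⬝ᵥ y) - r k)^2 := Finset.sum_nonneg fun k _ => sq_nonneg _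
  have hx : ∑ k, ((w k ⬝ᵥ y) - r k)^2
      = ∑ k, (w k ⬝ᵥ y)^2 - 2 * ∑ k, r k * (w k ⬝ᵥ y) + ∑ k, (r k)^2 := by
    rw [Finset.sum_congr rfl fun k (_ : k ∈ univ) => (by ring :
      ((w k ⬝ᵥ y) - r k)^2 = (w k ⬝ᵥ y)^2 - 2 * (r k * (w k ⬝ᵥ y)) + (r k)^2)]
    rw [Finset.sum_add_distrib, Finset.sum_sub_distrib, ← Finset.mul_sum]
  linarith [hx ▸ this]

lemma rearrange {q R : ℕ} (a c : Fin q → ℝ) (ha0 : ∀ i, 0 ≤ a i)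
    (hadec : ∀ i j : Fin q, i ≤ j → a j ≤ a i) (hc0 : ∀ i, 0 ≤ c i) (hc1 : ∀ i, c i ≤ 1)
    (hcs : ∑ i, c i ≤ (R : ℝ)) :
    ∑ i, a i * c i ≤ ∑ i ∈ univ.filter (fun i : Fin q => (i : ℕ) < R), a i := by
  by_cases hqR : q ≤ R
  · have hfil : univ.filter (fun i : Fin q => (i : ℕ) < R) = univ := by
      apply Finset.filter_true_of_mem
      intro i _; exact lt_of_lt_of_le i.isLt hqR
    rw [hfil]
    exact Finset.sum_le_sum fun i _ => by
      calc a i * c i ≤ a i * 1 := by nlinarith [ha0 i, hc1 i]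
        _ = a i := mul_one _
  · push_neg at hqR
    set t := a ⟨R, hqR⟩ with ht
    have ht0 : 0 ≤ t := ha0 _
    have hcard : (univ.filter (fun i : Fin q => (i : ℕ) < R)).card = R := by
      have : univ.filter (fun i : Fin q => (i : ℕ) < R)
          = Finset.map (Fin.castLEEmb hqR.le) univ := by
        ext i
        simp only [Finset.mem_filter, Finset.mem_univ, true_and, Finset.mem_map]
        constructor
        · intro h
          exact ⟨⟨(i : ℕ), h⟩, Fin.ext rfl⟩
        · rintro ⟨j, rfl⟩
          simpa using j.isLt
      rw [this, Finset.card_map, Finset.card_univ, Fintype.card_fin]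
    have key : ∑ i, (a i - t) * c i ≤ ∑ i ∈ univ.filter (fun i : Fin q => (i : ℕ) < R), (a i - t) := by
      rw [← Finset.sum_filter_add_sum_filter_not univ (fun i : Fin q => (i : ℕ) < R)
        (fun i => (a i - t) * c i)]
      have h1 : ∑ i ∈ univ.filter (fun i : Fin q => (i : ℕ) < R), (a i - t) * c i
          ≤ ∑ i ∈ univ.filter (fun i : Fin q => (i : ℕ) < R), (a i - t) := by
        refine Finset.sum_le_sum fun i hi => ?_
        simp only [Finset.mem_filter] at hi
        have hit : t ≤ a i := hadec ⟨i, i.isLt⟩ ⟨R, hqR⟩ (by simpa [Fin.le_def] using hi.2.le)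
        nlinarith [hc1 i, hc0 i]
      have h2 : ∑ i ∈ univ.filter (fun i : Fin q => ¬ (i : ℕ) < R), (a i - t) * c i ≤ 0 := by
        refine Finset.sum_nonpos fun i hi => ?_
        simp only [Finset.mem_filter, not_lt] at hi
        have hit : a i ≤ t := hadec ⟨R, hqR⟩ ⟨i, i.isLt⟩ (by simpa [Fin.le_def] using hi.2)
        nlinarith [hc0 i]
      linarith
    have expand : ∑ i, a i * c i = ∑ i, (a i - t) * c i + t * ∑ i, c i := by
      rw [Finset.mul_sum, ← Finset.sum_add_distrib]
      exact Finset.sum_congr rfl fun i _ => by ring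
    have expand2 : ∑ i ∈ univ.filter (fun i : Fin q => (i : ℕ) < R), (a i - t)
        = ∑ i ∈ univ.filter (fun i : Fin q => (i : ℕ) < R), a i - t * R := by
      rw [Finset.sum_sub_distrib, Finset.sum_const, hcard, nsmul_eq_mul]
      ring
    have : t * ∑ i, c i ≤ t * R := by nlinarith
    linarith

lemma inner_eq_dot {n : ℕ} (x y : EuclideanSpace ℝ (Fin n)) :
    (inner ℝ x y : ℝ) = (fun i => x i) ⬝ᵥ (fun i => y i) := by
  simp [PiLp.inner_apply, dotProduct, RCLike.inner_apply, mul_comm]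

lemma exists_onb_span {n R : ℕ} (g : Fin R → Fin n → ℝ) :
    ∃ (m : ℕ) (w : Fin m → Fin n → ℝ), m ≤ R ∧
      (∀ k l, w k ⬝ᵥ w l = if k = l then (1 : ℝ) else 0) ∧
      (∀ c : Fin R → ℝ, ∃ r : Fin m → ℝ, (∑ k, c k • g k) = ∑ t, r t • w t) := by
  classical
  set E := EuclideanSpace ℝ (Fin n) with hE
  let g' : Fin R → E := fun k => (WithLp.equiv 2 (Fin n → ℝ)).symm (g k)
  let V : Submodule ℝ E := Submodule.span ℝ (Set.range g')
  haveI : FiniteDimensional ℝ V := inferInstance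
  set m := Module.finrank ℝ V with hm
  have hmR : m ≤ R := by
    have h1 := finrank_span_le_card (R := ℝ) (Set.range g')
    have h2 : (Set.range g').toFinset.card ≤ R := by
      rw [Set.toFinset_card]
      simpa using Fintype.card_range_le g'
    exact le_trans h1 h2
  let b := stdOrthonormalBasis ℝ V
  let w : Fin m → Fin n → ℝ := fun t i => ((b t : E) : Fin n → ℝ) i
  refine ⟨m, w, hmR, ?_, ?_⟩
  · intro k l
    have hb := orthonormal_iff_ite.mp b.orthonormal k l
    rw [Submodule.coe_inner] at hb
    rw [inner_eq_dot] at hb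
    exact hb
  · intro c
    have hmem : (∑ k, c k • g' k) ∈ V := by
      refine Submodule.sum_mem _ fun k _ => Submodule.smul_mem _ _ ?_
      exact Submodule.subset_span ⟨k, rfl⟩
    set x : V := ⟨∑ k, c k • g' k, hmem⟩ with hx
    refine ⟨fun t => b.repr x t, ?_⟩
    have hrepr := b.sum_repr x
    have hcoe : ((∑ t, b.repr x t • b t : V) : E) = ∑ t, b.repr x t • (b t : E) := by
      rw [Submodule.coe_sum]
      exact Finset.sum_congr rfl fun t _ => rfl
    have : (∑ k, c k • g' k) = ∑ t, b.repr x t • (b t : E) := by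
      rw [← hcoe, hrepr]
    have h2 := congrArg WithLp.ofLp this
    rw [WithLp.ofLp_sum, WithLp.ofLp_sum] at h2
    exact h2

lemma frob2_sum_vecMulVec {n p q : ℕ} (τ : Fin q → ℝ) (u : Fin q → Fin n → ℝ)
    (v : Fin q → Fin p → ℝ)
    (hu : ∀ i j, u i ⬝ᵥ u j = if i = j then (1 : ℝ) else 0)
    (hv : ∀ i j, v i ⬝ᵥ v j = if i = j then (1 : ℝ) else 0) :
    frob2 (∑ i, τ i • vecMulVec (u i) (v i)) = ∑ i, (τ i) ^ 2 := by
  have hentry : ∀ a b, (∑ i, τ i • vecMulVec (u i) (v i)) a b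
      = ∑ i, (τ i * u i a) * v i b := by
    intro a b
    rw [Matrix.sum_apply]
    exact Finset.sum_congr rfl fun i _ => by
      simp [Matrix.vecMulVec_apply, mul_assoc]
  unfold frob2
  have hrow : ∀ a, ∑ b, ((∑ i, τ i • vecMulVec (u i) (v i)) a b) ^ 2
      = ∑ i, (τ i * u i a) ^ 2 := by
    intro a
    rw [Finset.sum_congr rfl fun b _ => by rw [hentry a b]]
    exact sum_sq_orth v hv _
  rw [Finset.sum_congr rfl fun a (_ : a ∈ univ) => hrow a]
  rw [Finset.sum_comm]
  refine Finset.sum_congr rfl fun i _ => ?_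
  have : ∑ a, (τ i * u i a) ^ 2 = τ i ^ 2 * (u i ⬝ᵥ u i) := by
    rw [dotProduct, Finset.mul_sum]
    exact Finset.sum_congr rfl fun a _ => by ring
  rw [this, hu i i]
  simp

lemma ey_lower {n p R q : ℕ} (σ : Fin q → ℝ) (u : Fin q → Fin n → ℝ) (v : Fin q → Fin p → ℝ)
    (hσ0 : ∀ i, 0 ≤ σ i) (hσdec : ∀ i j : Fin q, i ≤ j → σ j ≤ σ i)
    (hu : ∀ i j, u i ⬝ᵥ u j = if i = j then (1 : ℝ) else 0)
    (hv : ∀ i j, v i ⬝ᵥ v j = if i = j then (1 : ℝ) else 0)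
    (C : Matrix (Fin n) (Fin R) ℝ) (B : Matrix (Fin R) (Fin p) ℝ) :
    ∑ i ∈ univ.filter (fun i : Fin q => R ≤ (i : ℕ)), (σ i) ^ 2
      ≤ frob2 ((∑ i, σ i • vecMulVec (u i) (v i)) - C * B) := by
  classical
  obtain ⟨m, w, hmR, hw, hrep⟩ := exists_onb_span (fun k i => C i k)
  set M : Matrix (Fin n) (Fin p) ℝ := ∑ i, σ i • vecMulVec (u i) (v i) with hM
  have hMentry : ∀ a b, M a b = ∑ i, (σ i * u i a) * v i b := by
    intro a b
    rw [hM, Matrix.sum_apply]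
    exact Finset.sum_congr rfl fun i _ => by
      simp [Matrix.vecMulVec_apply, mul_assoc]
  -- columns of C*B are representable
  have hcol : ∀ j, ∃ r : Fin m → ℝ, (fun i => (C * B) i j) = ∑ t, r t • w t := by
    intro j
    obtain ⟨r, hr⟩ := hrep (fun k => B k j)
    refine ⟨r, ?_⟩
    rw [← hr]
    funext i
    rw [Finset.sum_apply]
    simp only [Matrix.mul_apply, Pi.smul_apply, smul_eq_mul]
    exact Finset.sum_congr rfl fun k _ => mul_comm _ _
  -- column dot form of frob2
  have hfrob : frob2 (M - C * B)
      = ∑ j, ((fun i => M i j) - fun i => (C * B) i j) ⬝ᵥ ((fun i => M i j) - fun i => (C * B) i j) := by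
    unfold frob2
    rw [Finset.sum_comm]
    refine Finset.sum_congr rfl fun j _ => ?_
    rw [dotProduct]
    exact Finset.sum_congr rfl fun i _ => by
      simp [Matrix.sub_apply, sq]
  set c : Fin q → ℝ := fun i => ∑ k, (w k ⬝ᵥ u i) ^ 2 with hc
  -- lower bound per column and sum
  have hlb : ∑ j, ((fun i => M i j) ⬝ᵥ (fun i => M i j)) - ∑ j, ∑ k, (w k ⬝ᵥ (fun i => M i j)) ^ 2
      ≤ frob2 (M - C * B) := by
    rw [hfrob, ← Finset.sum_sub_distrib]
    refine Finset.sum_le_sum fun j _ => ?_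
    obtain ⟨r, hr⟩ := hcol j
    rw [hr]
    exact dist_sq_ge w hw _ r
  -- first sum is ∑ σ²
  have hA : ∑ j, ((fun i => M i j) ⬝ᵥ (fun i => M i j)) = ∑ i, (σ i) ^ 2 := by
    have : ∑ j, ((fun i => M i j) ⬝ᵥ (fun i => M i j)) = frob2 M := by
      unfold frob2
      rw [Finset.sum_comm]
      refine Finset.sum_congr rfl fun j _ => ?_
      rw [dotProduct]
      exact Finset.sum_congr rfl fun i _ => (sq _).symm
    rw [this, hM, frob2_sum_vecMulVec σ u v hu hv]
  -- second sum is ∑ σ² c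
  have hB : ∑ j, ∑ k, (w k ⬝ᵥ (fun i => M i j)) ^ 2 = ∑ i, (σ i) ^ 2 * c i := by
    rw [Finset.sum_comm]
    have hk : ∀ k, ∀ j, (w k ⬝ᵥ (fun i => M i j)) = ∑ i, (σ i * (w k ⬝ᵥ u i)) * v i j := by
      intro k j
      rw [dotProduct]
      have : ∀ l, w k l * M l j = ∑ i, (σ i * (w k l * u i l)) * v i j := by
        intro l
        rw [hMentry l j, Finset.mul_sum]
        exact Finset.sum_congr rfl fun i _ => by ring
      rw [Finset.sum_congr rfl fun l (_ : l ∈ univ) => this l]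
      rw [Finset.sum_comm]
      refine Finset.sum_congr rfl fun i _ => ?_
      rw [dotProduct, Finset.mul_sum, Finset.sum_mul]
    have hksum : ∀ k, ∑ j, (w k ⬝ᵥ (fun i => M i j)) ^ 2 = ∑ i, (σ i * (w k ⬝ᵥ u i)) ^ 2 := by
      intro k
      rw [Finset.sum_congr rfl fun j (_ : j ∈ univ) => by rw [hk k j]]
      exact sum_sq_orth v hv _
    rw [Finset.sum_congr rfl fun k (_ : k ∈ univ) => hksum k]
    rw [Finset.sum_comm]
    refine Finset.sum_congr rfl fun i _ => ?_
    rw [hc, Finset.mul_sum]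
    exact Finset.sum_congr rfl fun k _ => by ring
  -- bounds on c
  have hc0 : ∀ i, 0 ≤ c i := fun i => Finset.sum_nonneg fun k _ => sq_nonneg _
  have hc1 : ∀ i, c i ≤ 1 := by
    intro i
    have := bessel w hw (u i)
    rw [hu i i] at this
    simpa using this
  have hcs : ∑ i, c i ≤ (R : ℝ) := by
    have h1 : ∑ i, c i ≤ (m : ℝ) := by
      rw [hc, Finset.sum_comm]
      have : ∀ k, ∑ i, (w k ⬝ᵥ u i) ^ 2 ≤ 1 := by
        intro k
        have hb := bessel u hu (w k)
        rw [hw k k] at hb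
        calc ∑ i, (w k ⬝ᵥ u i) ^ 2 = ∑ i, (u i ⬝ᵥ w k) ^ 2 :=
              Finset.sum_congr rfl fun i _ => by rw [dotProduct_comm]
          _ ≤ 1 := by simpa using hb
      calc ∑ k, ∑ i, (w k ⬝ᵥ u i) ^ 2 ≤ ∑ k : Fin m, (1:ℝ) :=
            Finset.sum_le_sum fun k _ => this k
        _ = (m : ℝ) := by simp
    exact le_trans h1 (by exact_mod_cast hmR)
  -- rearrangement
  have hre := rearrange (fun i => (σ i)^2) c (fun i => sq_nonneg _)
    (fun i j hij => by
      have h1 := hσdec i j hij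
      have h2 := hσ0 j
      nlinarith)
    hc0 hc1 hcs
  -- combine
  have hsplit : ∑ i ∈ univ.filter (fun i : Fin q => (i : ℕ) < R), (σ i)^2
      + ∑ i ∈ univ.filter (fun i : Fin q => R ≤ (i : ℕ)), (σ i)^2 = ∑ i, (σ i)^2 := by
    rw [← Finset.sum_filter_add_sum_filter_not univ (fun i : Fin q => (i : ℕ) < R)
      (fun i => (σ i)^2)]
    congr 1
    apply Finset.sum_congr _ fun _ _ => rfl
    apply Finset.filter_congr
    intro i _
    simp [not_lt]
  rw [hA, hB] at hlb
  linarith [hlb, hre, hsplit]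

lemma isUnit_XtX {n d : ℕ} (X : Matrix (Fin n) (Fin d) ℝ) (hX : X.rank = d) :
    IsUnit (Xᵀ * X) := by
  rw [← Matrix.mulVec_surjective_iff_isUnit]
  have hr : (Xᵀ * X).rank = d := by rw [Matrix.rank_transpose_mul_self, hX]
  have htop : LinearMap.range (Xᵀ * X).mulVecLin = ⊤ := by
    apply Submodule.eq_top_of_finrank_eq
    rw [← Matrix.rank] at *
    rw [hr]
    simp [Module.finrank_pi]
  intro y
  have : y ∈ LinearMap.range (Xᵀ * X).mulVecLin := htop ▸ Submodule.mem_top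
  obtain ⟨x, hx⟩ := this
  exact ⟨x, hx⟩

lemma sum_dite_fin {R q : ℕ} {M : Type*} [AddCommMonoid M] (f : Fin q → M) :
    (∑ k : Fin R, if h : (k : ℕ) < q then f ⟨k, h⟩ else 0)
      = ∑ i ∈ univ.filter (fun i : Fin q => (i : ℕ) < R), f i := by
  classical
  set g : ℕ → M := fun t => if h : t < q then f ⟨t, h⟩ else 0 with hg
  have hL : (∑ k : Fin R, if h : (k : ℕ) < q then f ⟨k, h⟩ else 0)
      = ∑ t ∈ Finset.range R, g t := Fin.sum_univ_eq_sum_range g R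
  have hR : (∑ i ∈ univ.filter (fun i : Fin q => (i : ℕ) < R), f i)
      = ∑ t ∈ Finset.range q, (if t < R then g t else 0) := by
    rw [Finset.sum_filter]
    rw [← Fin.sum_univ_eq_sum_range (fun t => if t < R then g t else 0) q]
    refine Finset.sum_congr rfl fun i _ => ?_
    by_cases h : (i : ℕ) < R <;> simp [h, hg, i.isLt]
  rw [hL, hR]
  have h1 : ∑ t ∈ Finset.range R, g t = ∑ t ∈ Finset.range (min R q), g t := by
    symm
    apply Finset.sum_subset (Finset.range_subset_range.mpr (min_le_left _ _))
    intro t ht hnt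
    simp only [Finset.mem_range] at ht hnt
    have : ¬ t < q := by omega
    simp [hg, this]
  have h2 : ∑ t ∈ Finset.range q, (if t < R then g t else 0)
      = ∑ t ∈ Finset.range (min R q), g t := by
    have e2 : ∑ t ∈ Finset.range q, (if t < R then g t else 0)
        = ∑ t ∈ Finset.range (min R q), (if t < R then g t else 0) := by
      symm
      apply Finset.sum_subset (Finset.range_subset_range.mpr (min_le_right _ _))
      intro t ht hnt
      simp only [Finset.mem_range] at ht hnt
      have : ¬ t < R := by omega
      simp [this]
    rw [e2]
    refine Finset.sum_congr rfl fun t ht => ?_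
    simp only [Finset.mem_range] at ht
    rw [if_pos (show t < R by omega)]
  rw [h1, h2]

end RRR
/-- The minimal value of `‖X(W₀ + AB) - Y‖_F²` over rank-`R` updates `AB`
equals `‖Π_X Y - Y‖_F² + ∑_{i > R} σᵢ(Π_X Y - X W₀)²`. -/
theorem reduced_rank_regression_min_value {n d p R : ℕ}
    (X : Matrix (Fin n) (Fin d) ℝ) (hX : X.rank = d)
    (Y : Matrix (Fin n) (Fin p) ℝ) (W₀ : Matrix (Fin d) (Fin p) ℝ)
    (σ : Fin (min d p) → ℝ)
    (u : Fin (min d p) → Fin n → ℝ) (v : Fin (min d p) → Fin p → ℝ)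
    (hσ0 : ∀ i, 0 ≤ σ i) (hσdec : ∀ i j : Fin (min d p), i ≤ j → σ j ≤ σ i)
    (hu : ∀ i j, u i ⬝ᵥ u j = if i = j then (1 : ℝ) else 0)
    (hv : ∀ i j, v i ⬝ᵥ v j = if i = j then (1 : ℝ) else 0)
    (hM : X * (Xᵀ * X)⁻¹ * Xᵀ * Y - X * W₀ = ∑ i, σ i • vecMulVec (u i) (v i)) :
    IsLeast
      {e : ℝ | ∃ (A : Matrix (Fin d) (Fin R) ℝ) (B : Matrix (Fin R) (Fin p) ℝ),
        e = frob2 (X * (W₀ + A * B) - Y)}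
      (frob2 (X * (Xᵀ * X)⁻¹ * Xᵀ * Y - Y) +
        ∑ i ∈ univ.filter (fun i : Fin (min d p) => R ≤ i.val), (σ i) ^ 2) := by
  classical
  open RRR in
  set P := X * (Xᵀ * X)⁻¹ * Xᵀ with hPdef
  have hU : IsUnit (Xᵀ * X) := RRR.isUnit_XtX X hX
  have hUdet : IsUnit (Xᵀ * X).det := (Matrix.isUnit_iff_isUnit_det _).mp hU
  have hinv : (Xᵀ * X)⁻¹ * (Xᵀ * X) = 1 := Matrix.nonsing_inv_mul _ hUdet
  have hmulinv : (Xᵀ * X) * (Xᵀ * X)⁻¹ = 1 := Matrix.mul_nonsing_inv _ hUdet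
  have hPX : P * X = X := by
    rw [hPdef, Matrix.mul_assoc, Matrix.mul_assoc, hinv, Matrix.mul_one]
  have hPP : P * P = P := by
    rw [hPdef]
    simp only [Matrix.mul_assoc]
    congr 1
    congr 1
    rw [← Matrix.mul_assoc Xᵀ X _, ← Matrix.mul_assoc (Xᵀ * X) _ Xᵀ, hmulinv, Matrix.one_mul]
  have hPt : Pᵀ = P := by
    rw [hPdef, Matrix.transpose_mul, Matrix.transpose_mul, Matrix.transpose_transpose,
      Matrix.transpose_nonsing_inv, Matrix.transpose_mul, Matrix.transpose_transpose,
      ← Matrix.mul_assoc]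
  set M' := P * Y - X * W₀ with hM'
  -- decomposition of the objective
  have hsplitAB : ∀ (A : Matrix (Fin d) (Fin R) ℝ) (B : Matrix (Fin R) (Fin p) ℝ),
      frob2 (X * (W₀ + A * B) - Y)
        = frob2 (X * (A * B) - M') + frob2 (P * Y - Y) := by
    intro A B
    have hsum : X * (W₀ + A * B) - Y
        = (X * (A * B) - M') + (P * Y - Y) := by
      rw [hM', Matrix.mul_add]
      abel
    have hform : P * (X * (A * B) + X * W₀ - Y) = X * (A * B) - M' := by
      rw [hM', Matrix.mul_sub, Matrix.mul_add]
      simp only [← Matrix.mul_assoc]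
      rw [hPX]
      simp only [Matrix.mul_assoc]
      abel
    have hPD : P * (P * Y - Y) = 0 := by
      rw [Matrix.mul_sub, ← Matrix.mul_assoc, hPP, sub_self]
    have hcross : RRR.ipF (X * (A * B) - M') (P * Y - Y) = 0 := by
      rw [← hform, RRR.ipF_mul_left, hPt, hPD, RRR.ipF_zero_right]
    rw [hsum, RRR.frob2_add, hcross]
    ring
  -- entries of M' and key projection property
  have hMe : ∀ a b, M' a b = ∑ t, (σ t * u t a) * v t b := by
    intro a b
    rw [hM, Matrix.sum_apply]
    exact Finset.sum_congr rfl fun t _ => by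
      simp [Matrix.vecMulVec_apply, mul_assoc]
  have hMv : ∀ i, M' *ᵥ (v i) = σ i • u i := by
    intro i
    funext l
    show (fun b => M' l b) ⬝ᵥ (v i) = _
    rw [dotProduct]
    have h1 : ∀ b, M' l b * v i b = ∑ t, (σ t * u t l) * (v t b * v i b) := by
      intro b
      rw [hMe l b, Finset.sum_mul]
      exact Finset.sum_congr rfl fun t _ => by ring
    rw [Finset.sum_congr rfl fun b (_ : b ∈ univ) => h1 b, Finset.sum_comm]
    have h2 : ∀ t, ∑ b, (σ t * u t l) * (v t b * v i b) = (σ t * u t l) * (v t ⬝ᵥ v i) := by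
      intro t
      rw [dotProduct, Finset.mul_sum]
    rw [Finset.sum_congr rfl fun t (_ : t ∈ univ) => h2 t]
    simp only [hv, mul_ite, mul_one, mul_zero]
    rw [Finset.sum_ite_eq' univ i fun t => σ t * u t l]
    simp
  have hPu : ∀ i, P *ᵥ (σ i • u i) = σ i • u i := by
    intro i
    have hPM : P * M' = M' := by
      rw [hM', Matrix.mul_sub, ← Matrix.mul_assoc, hPP, ← Matrix.mul_assoc, hPX]
    calc P *ᵥ (σ i • u i) = P *ᵥ (M' *ᵥ v i) := by rw [hMv i]
      _ = (P * M') *ᵥ v i := Matrix.mulVec_mulVec _ _ _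
      _ = M' *ᵥ v i := by rw [hPM]
      _ = σ i • u i := hMv i
  -- the witness matrices
  let A0 : Matrix (Fin d) (Fin R) ℝ := fun t k =>
    if h : (k : ℕ) < min d p then (((Xᵀ * X)⁻¹ * Xᵀ) *ᵥ (σ ⟨k, h⟩ • u ⟨k, h⟩)) t else 0
  let B0 : Matrix (Fin R) (Fin p) ℝ := fun k j =>
    if h : (k : ℕ) < min d p then v ⟨k, h⟩ j else 0
  have hA0 : ∀ t k, A0 t k
      = if h : (k : ℕ) < min d p then (((Xᵀ * X)⁻¹ * Xᵀ) *ᵥ (σ ⟨k, h⟩ • u ⟨k, h⟩)) t else 0 :=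
    fun _ _ => rfl
  have hB0 : ∀ k j, B0 k j = if h : (k : ℕ) < min d p then v ⟨k, h⟩ j else 0 := fun _ _ => rfl
  have hXA : ∀ i k, (X * A0) i k
      = if h : (k : ℕ) < min d p then (σ ⟨k, h⟩ • u ⟨k, h⟩) i else 0 := by
    intro i k
    by_cases h : (k : ℕ) < min d p
    · rw [dif_pos h, Matrix.mul_apply]
      calc ∑ t, X i t * A0 t k
          = ∑ t, X i t * (((Xᵀ * X)⁻¹ * Xᵀ) *ᵥ (σ ⟨k, h⟩ • u ⟨k, h⟩)) t :=
            Finset.sum_congr rfl fun t _ => by rw [hA0 t k, dif_pos h]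
        _ = (X *ᵥ (((Xᵀ * X)⁻¹ * Xᵀ) *ᵥ (σ ⟨k, h⟩ • u ⟨k, h⟩))) i := rfl
        _ = ((X * ((Xᵀ * X)⁻¹ * Xᵀ)) *ᵥ (σ ⟨k, h⟩ • u ⟨k, h⟩)) i := by
            rw [Matrix.mulVec_mulVec]
        _ = (P *ᵥ (σ ⟨k, h⟩ • u ⟨k, h⟩)) i := by rw [hPdef, Matrix.mul_assoc]
        _ = (σ ⟨k, h⟩ • u ⟨k, h⟩) i := by rw [hPu]
    · rw [dif_neg h, Matrix.mul_apply]
      exact Finset.sum_eq_zero fun t _ => by rw [hA0 t k, dif_neg h, mul_zero]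
  have hXAB : X * (A0 * B0) = ∑ i ∈ univ.filter (fun i : Fin (min d p) => (i : ℕ) < R),
      σ i • vecMulVec (u i) (v i) := by
    rw [← Matrix.mul_assoc]
    funext i j
    rw [Matrix.sum_apply, Matrix.mul_apply]
    have h1 : ∀ k, (X * A0) i k * B0 k j
        = if h : (k : ℕ) < min d p
            then (σ ⟨k, h⟩ • vecMulVec (u ⟨k, h⟩) (v ⟨k, h⟩)) i j else 0 := by
      intro k
      by_cases h : (k : ℕ) < min d p
      · rw [hXA i k, dif_pos h, hB0 k j, dif_pos h, dif_pos h]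
        simp [Matrix.vecMulVec_apply, mul_assoc]
      · rw [hXA i k, dif_neg h, dif_neg h, zero_mul]
    rw [Finset.sum_congr rfl fun k (_ : k ∈ univ) => h1 k]
    exact RRR.sum_dite_fin (fun i' : Fin (min d p) => (σ i' • vecMulVec (u i') (v i')) i j)
  -- splitting the full sum
  have hTS : (∑ i ∈ univ.filter (fun i : Fin (min d p) => (i : ℕ) < R), σ i • vecMulVec (u i) (v i))
      + (∑ i ∈ univ.filter (fun i : Fin (min d p) => R ≤ (i : ℕ)), σ i • vecMulVec (u i) (v i))
      = M' := by
    rw [hM]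
    rw [← Finset.sum_filter_add_sum_filter_not univ (fun i : Fin (min d p) => (i : ℕ) < R)
      (fun i => σ i • vecMulVec (u i) (v i))]
    congr 1
    refine Finset.sum_congr ?_ fun _ _ => rfl
    refine Finset.filter_congr fun i _ => ?_
    simp [not_lt]
  have hfrobT : frob2 (∑ i ∈ univ.filter (fun i : Fin (min d p) => R ≤ (i : ℕ)),
        σ i • vecMulVec (u i) (v i))
      = ∑ i ∈ univ.filter (fun i : Fin (min d p) => R ≤ (i : ℕ)), (σ i) ^ 2 := by
    set τ : Fin (min d p) → ℝ := fun i => if R ≤ (i : ℕ) then σ i else 0 with hτ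
    have h1 : (∑ i ∈ univ.filter (fun i : Fin (min d p) => R ≤ (i : ℕ)),
          σ i • vecMulVec (u i) (v i))
        = ∑ i, τ i • vecMulVec (u i) (v i) := by
      rw [Finset.sum_filter]
      refine Finset.sum_congr rfl fun i _ => ?_
      by_cases h : R ≤ (i : ℕ) <;> simp [hτ, h]
    rw [h1, RRR.frob2_sum_vecMulVec τ u v hu hv, Finset.sum_filter]
    refine Finset.sum_congr rfl fun i _ => ?_
    by_cases h : R ≤ (i : ℕ) <;> simp [hτ, h]
  constructor
  · -- membership
    refine ⟨A0, B0, ?_⟩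
    rw [hsplitAB A0 B0]
    have hdiff : X * (A0 * B0) - M'
        = -(∑ i ∈ univ.filter (fun i : Fin (min d p) => R ≤ (i : ℕ)),
            σ i • vecMulVec (u i) (v i)) := by
      rw [hXAB, ← hTS]
      abel
    rw [hdiff, RRR.frob2_neg, hfrobT]
    ring
  · -- lower bound
    rintro e ⟨A, B, rfl⟩
    rw [hsplitAB A B]
    have hEY := RRR.ey_lower σ u v hσ0 hσdec hu hv (X * A) B
    have h2 : frob2 (X * (A * B) - M')
        = frob2 ((∑ i, σ i • vecMulVec (u i) (v i)) - (X * A) * B) := by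
      rw [← RRR.frob2_neg (X * (A * B) - M'), neg_sub, hM, Matrix.mul_assoc]
    rw [h2]
    linarith [hEY]
end

section
/- Let X ∈ ℝ^{n×d} have full column rank, Y ∈ ℝ^{n×p}, W_0 ∈ ℝ^{d×p}. Define W_1 = W_0 + ((XᵀX)⁻¹XᵀY - W_0)Σ_{i=1}^R v_i v_iᵀ, where v_1,...,v_R are top right singular vectors of Π_X Y - X W_0. Then Π_X Y - X W_1 = (Π_X Y - X W_0) Σ_{i=R+1}^{min(d,p)} v_i v_iᵀ. -/
open Matrix BigOperators Finset

lemma vmv_mul_vmv {m p q : Type*} [Fintype p]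
    (a : m → ℝ) (b c : p → ℝ) (d : q → ℝ) :
    vecMulVec a b * vecMulVec c d = (b ⬝ᵥ c) • vecMulVec a d := by
  ext i j
  simp only [Matrix.mul_apply, vecMulVec_apply, Matrix.smul_apply, smul_eq_mul, dotProduct,
    Finset.sum_mul]
  exact Finset.sum_congr rfl fun k _ => by ring

/-- One-step residual recurrence for ROSA on least squares: after the optimal
rank-`R` update `W₁ = W₀ + ((XᵀX)⁻¹XᵀY - W₀) ∑_{i ≤ R} vᵢvᵢᵀ`, the new residual
is the old residual projected onto the remaining right singular subspace:
`Π_X Y - X W₁ = (Π_X Y - X W₀) ∑_{i > R} vᵢvᵢᵀ`. -/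
theorem rosa_residual_recurrence {n d p R : ℕ}
    (X : Matrix (Fin n) (Fin d) ℝ) (hX : X.rank = d)
    (Y : Matrix (Fin n) (Fin p) ℝ) (W₀ : Matrix (Fin d) (Fin p) ℝ)
    (σ : Fin (min d p) → ℝ)
    (u : Fin (min d p) → Fin n → ℝ) (v : Fin (min d p) → Fin p → ℝ)
    (hσ0 : ∀ i, 0 ≤ σ i) (hσdec : ∀ i j : Fin (min d p), i ≤ j → σ j ≤ σ i)
    (hu : ∀ i j, u i ⬝ᵥ u j = if i = j then (1 : ℝ) else 0)
    (hv : ∀ i j, v i ⬝ᵥ v j = if i = j then (1 : ℝ) else 0)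
    (hM : X * (Xᵀ * X)⁻¹ * Xᵀ * Y - X * W₀ = ∑ i, σ i • vecMulVec (u i) (v i))
    (W₁ : Matrix (Fin d) (Fin p) ℝ)
    (hW₁ : W₁ = W₀ + ((Xᵀ * X)⁻¹ * Xᵀ * Y - W₀) *
        ∑ i ∈ univ.filter (fun i : Fin (min d p) => i.val < R),
          vecMulVec (v i) (v i)) :
    X * (Xᵀ * X)⁻¹ * Xᵀ * Y - X * W₁ =
      (X * (Xᵀ * X)⁻¹ * Xᵀ * Y - X * W₀) *
        ∑ i ∈ univ.filter (fun i : Fin (min d p) => R ≤ i.val),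
          vecMulVec (v i) (v i) := by
  set E := X * (Xᵀ * X)⁻¹ * Xᵀ * Y - X * W₀ with hE
  set Plt := ∑ i ∈ univ.filter (fun i : Fin (min d p) => i.val < R),
      vecMulVec (v i) (v i) with hPlt
  set Pge := ∑ i ∈ univ.filter (fun i : Fin (min d p) => R ≤ i.val),
      vecMulVec (v i) (v i) with hPge
  have hfull : E * ∑ i, vecMulVec (v i) (v i) = E := by
    rw [hM, Matrix.sum_mul]
    refine Finset.sum_congr rfl fun i _ => ?_
    rw [Matrix.smul_mul, Matrix.mul_sum]
    congr 1
    rw [Finset.sum_congr rfl fun j _ => vmv_mul_vmv (u i) (v i) (v j) (v j)]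
    simp [hv, ite_smul]
  have hsplit : Plt + Pge = ∑ i, vecMulVec (v i) (v i) := by
    rw [hPlt, hPge]
    have h2 : (univ.filter (fun i : Fin (min d p) => R ≤ i.val))
        = univ.filter (fun i : Fin (min d p) => ¬ i.val < R) := by
      apply Finset.filter_congr
      intro i _
      simp [not_lt]
    rw [h2, Finset.sum_filter_add_sum_filter_not]
  have hXW₁ : X * W₁ = X * W₀ + E * Plt := by
    rw [hW₁, Matrix.mul_add, ← Matrix.mul_assoc, Matrix.mul_sub, hE, Matrix.sub_mul,
      Matrix.sub_mul, ← Matrix.mul_assoc, ← Matrix.mul_assoc]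
  have h3 : X * (Xᵀ * X)⁻¹ * Xᵀ * Y - X * W₁ = E - E * Plt := by
    rw [hXW₁, hE]; abel
  have h4 : E - E * Plt = E * (Plt + Pge) - E * Plt := by rw [hsplit, hfull]
  rw [h3, h4, Matrix.mul_add]
  abel
end

section
/- With the iterates W_t as above, if t ≥ ⌈rank(Π_X Y - X W_0)/R⌉ then X W_t = Π_X Y, and hence ‖X W_t - Y‖_F² = ‖Π_X Y - Y‖_F², the minimal least-squares error. In particular, if there exists W* with X W* = Y, then ‖X W_t - Y‖_F = 0 for such t. -/
open Matrix BigOperators Finset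

lemma my_sum_mulVec {ι m n : Type*} [Fintype n] (s : Finset ι)
    (A : ι → Matrix m n ℝ) (x : n → ℝ) :
    (∑ i ∈ s, A i).mulVec x = ∑ i ∈ s, (A i).mulVec x := by
  ext j
  simp only [Matrix.mulVec, dotProduct, Finset.sum_apply, Finset.sum_mul]
  rw [Finset.sum_comm]
  exact Finset.sum_congr rfl fun k _ => by rw [Matrix.sum_apply, Finset.sum_mul]

lemma my_sum_dotProduct {ι n : Type*} [Fintype n] (s : Finset ι)
    (f : ι → n → ℝ) (x : n → ℝ) :
    (∑ i ∈ s, f i) ⬝ᵥ x = ∑ i ∈ s, f i ⬝ᵥ x := by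
  simp only [dotProduct, Finset.sum_apply, Finset.sum_mul]
  rw [Finset.sum_comm]

lemma my_vecMulVec_mulVec {m n : Type*} [Fintype n] (a : m → ℝ) (b : n → ℝ) (x : n → ℝ) :
    (vecMulVec a b).mulVec x = (b ⬝ᵥ x) • a := by
  ext i
  simp only [Matrix.mulVec, dotProduct, vecMulVec_apply, Pi.smul_apply, smul_eq_mul,
    Finset.sum_mul]
  exact Finset.sum_congr rfl fun k _ => by ring

lemma my_vecMulVec_mul {m n p : Type*} [Fintype n] (a : m → ℝ) (b : n → ℝ)
    (c : n → ℝ) (e : p → ℝ) :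
    vecMulVec a b * vecMulVec c e = (b ⬝ᵥ c) • vecMulVec a e := by
  ext i j
  simp only [Matrix.mul_apply, vecMulVec_apply, Matrix.smul_apply, smul_eq_mul,
    dotProduct, Finset.sum_mul]
  exact Finset.sum_congr rfl fun k _ => by ring

lemma my_orthonormal_li {q n : ℕ} (u : Fin q → Fin n → ℝ)
    (hu : ∀ i j, u i ⬝ᵥ u j = if i = j then (1 : ℝ) else 0) :
    LinearIndependent ℝ u := by
  rw [linearIndependent_iff']
  intro s g hsum i hi
  have h := congrArg (fun w => w ⬝ᵥ u i) hsum
  simp only [my_sum_dotProduct, smul_dotProduct, zero_dotProduct, smul_eq_mul, hu,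
    mul_ite, mul_one, mul_zero] at h
  rwa [Finset.sum_ite_eq' s i g, if_pos hi] at h

theorem rosa_main {n d p R : ℕ} (hR : 0 < R)
    (X : Matrix (Fin n) (Fin d) ℝ) (hX : X.rank = d)
    (Y : Matrix (Fin n) (Fin p) ℝ) (W₀ : Matrix (Fin d) (Fin p) ℝ)
    (σ : Fin (min d p) → ℝ)
    (u : Fin (min d p) → Fin n → ℝ) (v : Fin (min d p) → Fin p → ℝ)
    (hσ0 : ∀ i, 0 ≤ σ i) (hσdec : ∀ i j : Fin (min d p), i ≤ j → σ j ≤ σ i)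
    (hu : ∀ i j, u i ⬝ᵥ u j = if i = j then (1 : ℝ) else 0)
    (hv : ∀ i j, v i ⬝ᵥ v j = if i = j then (1 : ℝ) else 0)
    (hM : X * (Xᵀ * X)⁻¹ * Xᵀ * Y - X * W₀ = ∑ i, σ i • vecMulVec (u i) (v i))
    (t : ℕ) (ht : (X * (Xᵀ * X)⁻¹ * Xᵀ * Y - X * W₀).rank ≤ t * R)
    (Wt : Matrix (Fin d) (Fin p) ℝ)
    (hWt : Wt = W₀ + ((Xᵀ * X)⁻¹ * Xᵀ * Y - W₀) *
        ∑ i ∈ univ.filter (fun i : Fin (min d p) => i.val < t * R),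
          vecMulVec (v i) (v i)) :
    X * Wt = X * (Xᵀ * X)⁻¹ * Xᵀ * Y := by
  set E : Matrix (Fin n) (Fin p) ℝ := X * (Xᵀ * X)⁻¹ * Xᵀ * Y - X * W₀ with hE
  set P : Matrix (Fin p) (Fin p) ℝ :=
    ∑ i ∈ univ.filter (fun i : Fin (min d p) => i.val < t * R),
      vecMulVec (v i) (v i) with hP
  -- E applied to v i gives σ i • u i
  have hEv : ∀ i, E.mulVec (v i) = σ i • u i := by
    intro i
    rw [hM, my_sum_mulVec]
    have : ∀ k : Fin (min d p),
        (σ k • vecMulVec (u k) (v k)).mulVec (v i) =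
          (if k = i then σ k • u k else 0) := by
      intro k
      rw [Matrix.smul_mulVec, my_vecMulVec_mulVec, hv]
      by_cases h : k = i <;> simp [h, smul_smul]
    rw [Finset.sum_congr rfl fun k _ => this k, Finset.sum_ite_eq' univ i fun k => σ k • u k,
      if_pos (Finset.mem_univ i)]
  -- singular values beyond t*R vanish
  have hσzero : ∀ i : Fin (min d p), t * R ≤ i.val → σ i = 0 := by
    intro j hj
    by_contra hne
    have hjpos : 0 < σ j := lt_of_le_of_ne (hσ0 j) (Ne.symm hne)
    have hpos : ∀ i : Fin (min d p), i ≤ j → σ i ≠ 0 :=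
      fun i hij => ne_of_gt (lt_of_lt_of_le hjpos (hσdec i j hij))
    -- embed Fin (j.val + 1) into Fin (min d p)
    set f : Fin (j.val + 1) → Fin (min d p) :=
      fun k => ⟨k.val, lt_of_le_of_lt (Nat.lt_succ_iff.mp k.isLt) j.isLt⟩ with hf
    have hfle : ∀ k, f k ≤ j := fun k => Nat.lt_succ_iff.mp k.isLt
    have hfinj : Function.Injective f := by
      intro a b hab
      simp only [hf, Fin.mk.injEq] at hab
      exact Fin.ext hab
    have hmem : ∀ k, u (f k) ∈ LinearMap.range E.mulVecLin := by
      intro k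
      refine ⟨(σ (f k))⁻¹ • v (f k), ?_⟩
      rw [LinearMap.map_smul, Matrix.mulVecLin_apply, hEv, smul_smul,
        inv_mul_cancel₀ (hpos _ (hfle k)), one_smul]
    have hli : LinearIndependent ℝ (u ∘ f) :=
      (my_orthonormal_li u hu).comp f hfinj
    have hspan : Submodule.span ℝ (Set.range (u ∘ f)) ≤ LinearMap.range E.mulVecLin := by
      rw [Submodule.span_le]
      rintro _ ⟨k, rfl⟩
      exact hmem k
    have hcard : j.val + 1 ≤ E.rank := by
      have h1 : Module.finrank ℝ (Submodule.span ℝ (Set.range (u ∘ f))) = j.val + 1 := by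
        rw [finrank_span_eq_card hli, Fintype.card_fin]
      have h2 := Submodule.finrank_mono hspan
      rw [h1] at h2
      exact h2
    omega
  -- E * P = E
  have hEP : E * P = E := by
    rw [hM, Matrix.sum_mul]
    refine Finset.sum_congr rfl fun k _ => ?_
    rw [hP, Matrix.smul_mul, Matrix.mul_sum]
    have : ∀ i ∈ univ.filter (fun i : Fin (min d p) => i.val < t * R),
        vecMulVec (u k) (v k) * vecMulVec (v i) (v i) =
          (if k = i then vecMulVec (u k) (v i) else 0) := by
      intro i _
      rw [my_vecMulVec_mul, hv]
      by_cases h : k = i <;> simp [h]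
    rw [Finset.sum_congr rfl this, Finset.sum_ite_eq _ k fun i => vecMulVec (u k) (v i)]
    by_cases hk : k ∈ univ.filter (fun i : Fin (min d p) => i.val < t * R)
    · rw [if_pos hk]
    · rw [if_neg hk, smul_zero]
      have hk' : ¬ (k.val < t * R) := by simpa using hk
      rw [hσzero k (Nat.le_of_not_lt hk')]
      simp
  have hXA : X * ((Xᵀ * X)⁻¹ * Xᵀ * Y - W₀) = E := by
    rw [Matrix.mul_sub, hE]
    congr 1
    rw [← Matrix.mul_assoc, ← Matrix.mul_assoc]
  rw [hWt, Matrix.mul_add, ← Matrix.mul_assoc, hXA, hEP, hE]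
  abel

/-- ROSA convergence guarantee: with iterates
`W_t = W₀ + ((XᵀX)⁻¹XᵀY - W₀) ∑_{i=1}^{tR} vᵢvᵢᵀ`, if
`t ≥ ⌈rank(Π_X Y - X W₀)/R⌉` (equivalently `rank(Π_X Y - X W₀) ≤ t·R` for `R > 0`)
then `X W_t = Π_X Y`, hence `‖X W_t - Y‖_F² = ‖Π_X Y - Y‖_F²`; in particular
if `X W* = Y` for some `W*` then the error is zero. -/
theorem rosa_convergence {n d p R : ℕ} (hR : 0 < R)
    (X : Matrix (Fin n) (Fin d) ℝ) (hX : X.rank = d)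
    (Y : Matrix (Fin n) (Fin p) ℝ) (W₀ : Matrix (Fin d) (Fin p) ℝ)
    (σ : Fin (min d p) → ℝ)
    (u : Fin (min d p) → Fin n → ℝ) (v : Fin (min d p) → Fin p → ℝ)
    (hσ0 : ∀ i, 0 ≤ σ i) (hσdec : ∀ i j : Fin (min d p), i ≤ j → σ j ≤ σ i)
    (hu : ∀ i j, u i ⬝ᵥ u j = if i = j then (1 : ℝ) else 0)
    (hv : ∀ i j, v i ⬝ᵥ v j = if i = j then (1 : ℝ) else 0)
    (hM : X * (Xᵀ * X)⁻¹ * Xᵀ * Y - X * W₀ = ∑ i, σ i • vecMulVec (u i) (v i))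
    (t : ℕ) (ht : (X * (Xᵀ * X)⁻¹ * Xᵀ * Y - X * W₀).rank ≤ t * R)
    (Wt : Matrix (Fin d) (Fin p) ℝ)
    (hWt : Wt = W₀ + ((Xᵀ * X)⁻¹ * Xᵀ * Y - W₀) *
        ∑ i ∈ univ.filter (fun i : Fin (min d p) => i.val < t * R),
          vecMulVec (v i) (v i)) :
    X * Wt = X * (Xᵀ * X)⁻¹ * Xᵀ * Y ∧
    frob2 (X * Wt - Y) = frob2 (X * (Xᵀ * X)⁻¹ * Xᵀ * Y - Y) ∧
    ((∃ Wstar : Matrix (Fin d) (Fin p) ℝ, X * Wstar = Y) →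
      frob2 (X * Wt - Y) = 0) := by
  have h1 : X * Wt = X * (Xᵀ * X)⁻¹ * Xᵀ * Y :=
    rosa_main hR X hX Y W₀ σ u v hσ0 hσdec hu hv hM t ht Wt hWt
  refine ⟨h1, by rw [h1], ?_⟩
  rintro ⟨Wstar, hW⟩
  have hrk : (Xᵀ * X).rank = Fintype.card (Fin d) := by
    rw [Matrix.rank_transpose_mul_self, hX, Fintype.card_fin]
  have htop : LinearMap.range (Xᵀ * X).mulVecLin = ⊤ := by
    apply Submodule.eq_top_of_finrank_eq
    have hdef : Module.finrank ℝ (LinearMap.range (Xᵀ * X).mulVecLin) = (Xᵀ * X).rank := rfl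
    rw [hdef, hrk, Module.finrank_fintype_fun_eq_card]
  have hunit : IsUnit (Xᵀ * X) := by
    rw [← Matrix.mulVec_surjective_iff_isUnit]
    have hs := LinearMap.range_eq_top.mp htop
    rwa [Matrix.coe_mulVecLin] at hs
  have hinv : (Xᵀ * X)⁻¹ * (Xᵀ * X) = 1 :=
    Matrix.nonsing_inv_mul _ ((Matrix.isUnit_iff_isUnit_det _).mp hunit)
  have hProj : X * (Xᵀ * X)⁻¹ * Xᵀ * Y = Y := by
    rw [← hW, ← Matrix.mul_assoc, Matrix.mul_assoc (X * (Xᵀ * X)⁻¹) Xᵀ X,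
      Matrix.mul_assoc X (Xᵀ * X)⁻¹ (Xᵀ * X), hinv, Matrix.mul_one]
  rw [h1, hProj, sub_self]
  simp [frob2]
end

section
/- Let X ∈ ℝ^{n×d} have full column rank and suppose there exists W* with XW* = Y. If rank(XW_0 - Y) > R, then for every A ∈ ℝ^{d×R}, B ∈ ℝ^{R×p}, we have ‖X(W_0 + AB) - Y‖_F² ≥ σ_{R+1}(XW_0 - Y)² > 0; i.e., LoRA with rank R cannot achieve zero error in a single (fixed-subspace) optimization. -/
open Matrix BigOperators Finset

lemma frob2_mulVec_le {n p : ℕ} (C : Matrix (Fin n) (Fin p) ℝ) (w : Fin p → ℝ) :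
    (C *ᵥ w) ⬝ᵥ (C *ᵥ w) ≤ frob2 C * (w ⬝ᵥ w) := by
  unfold frob2
  rw [Finset.sum_mul]
  simp only [dotProduct, Matrix.mulVec]
  refine Finset.sum_le_sum fun i _ => ?_
  calc ((fun j => C i j) ⬝ᵥ w) * ((fun j => C i j) ⬝ᵥ w)
      = (∑ j, C i j * w j) ^ 2 := by rw [sq]; rfl
    _ ≤ (∑ j, C i j ^ 2) * (∑ j, w j ^ 2) :=
        Finset.sum_mul_sq_le_sq_mul_sq _ _ _
    _ = (∑ j, C i j ^ 2) * (∑ j, w j * w j) := by simp [sq]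

lemma sum_restrict {m R : ℕ} (hR : R ≤ m) (f : Fin m → ℝ)
    (hf : ∀ x : Fin m, ¬ (x : ℕ) < R → f x = 0) :
    ∑ x, f x = ∑ k : Fin R, f ⟨k, lt_of_lt_of_le k.2 hR⟩ := by
  have hinj : ∀ a ∈ (Finset.univ : Finset (Fin R)), ∀ b ∈ (Finset.univ : Finset (Fin R)),
      (⟨a, lt_of_lt_of_le a.2 hR⟩ : Fin m) = ⟨b, lt_of_lt_of_le b.2 hR⟩ → a = b := by
    intro a _ b _ hab
    simpa [Fin.ext_iff] using hab
  rw [← Finset.sum_image hinj]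
  symm
  apply Finset.sum_subset (Finset.subset_univ _)
  intro x _ hx
  apply hf
  intro hlt
  exact hx (Finset.mem_image.mpr ⟨⟨x, hlt⟩, Finset.mem_univ _, Fin.ext rfl⟩)

lemma sum_dotProduct' {ι m : Type*} [Fintype m] (s : Finset ι) (f : ι → (m → ℝ)) (w : m → ℝ) :
    (∑ i ∈ s, f i) ⬝ᵥ w = ∑ i ∈ s, f i ⬝ᵥ w := by
  simp only [dotProduct, Finset.sum_apply, Finset.sum_mul]
  exact Finset.sum_comm

lemma dotProduct_sum' {ι m : Type*} [Fintype m] (s : Finset ι) (w : m → ℝ) (f : ι → (m → ℝ)) :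
    w ⬝ᵥ (∑ i ∈ s, f i) = ∑ i ∈ s, w ⬝ᵥ f i := by
  simp only [dotProduct, Finset.sum_apply, Finset.mul_sum]
  exact Finset.sum_comm

lemma sum_embed_le {m R : ℕ} (hR : R ≤ m) (f : Fin m → ℝ) (hf : ∀ x, 0 ≤ f x) :
    ∑ k : Fin R, f ⟨k, lt_of_lt_of_le k.2 hR⟩ ≤ ∑ x, f x := by
  have hinj : ∀ a ∈ (Finset.univ : Finset (Fin R)), ∀ b ∈ (Finset.univ : Finset (Fin R)),
      (⟨a, lt_of_lt_of_le a.2 hR⟩ : Fin m) = ⟨b, lt_of_lt_of_le b.2 hR⟩ → a = b := by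
    intro a _ b _ hab
    simpa [Fin.ext_iff] using hab
  rw [← Finset.sum_image hinj]
  exact Finset.sum_le_sum_of_subset_of_nonneg (Finset.subset_univ _) (fun i _ _ => hf i)

/-- If `X W* = Y` is realizable but `rank (X W₀ - Y) > R`, then LoRA with rank
`R` cannot achieve zero error: for every `A`, `B`,
`‖X(W₀ + AB) - Y‖_F² ≥ σ_{R+1}(X W₀ - Y)² > 0`. -/
theorem lora_cannot_reach_zero_error {n d p R : ℕ} (hRm : R < min n p)
    (X : Matrix (Fin n) (Fin d) ℝ) (hX : X.rank = d)
    (Y : Matrix (Fin n) (Fin p) ℝ) (W₀ : Matrix (Fin d) (Fin p) ℝ)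
    (hWstar : ∃ Wstar : Matrix (Fin d) (Fin p) ℝ, X * Wstar = Y)
    (σ : Fin (min n p) → ℝ)
    (u : Fin (min n p) → Fin n → ℝ) (v : Fin (min n p) → Fin p → ℝ)
    (hσ0 : ∀ i, 0 ≤ σ i) (hσdec : ∀ i j : Fin (min n p), i ≤ j → σ j ≤ σ i)
    (hu : ∀ i j, u i ⬝ᵥ u j = if i = j then (1 : ℝ) else 0)
    (hv : ∀ i j, v i ⬝ᵥ v j = if i = j then (1 : ℝ) else 0)
    (hM : X * W₀ - Y = ∑ i, σ i • vecMulVec (u i) (v i))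
    (hrank : R < (X * W₀ - Y).rank) :
    0 < (σ ⟨R, hRm⟩) ^ 2 ∧
    ∀ (A : Matrix (Fin d) (Fin R) ℝ) (B : Matrix (Fin R) (Fin p) ℝ),
      (σ ⟨R, hRm⟩) ^ 2 ≤ frob2 (X * (W₀ + A * B) - Y) := by
  have hR1 : R + 1 ≤ min n p := hRm
  have hRle : R ≤ min n p := le_of_lt hRm
  set M := X * W₀ - Y with hMdef
  -- Part 1 : σ_R > 0
  have hσpos : 0 < σ ⟨R, hRm⟩ := by
    rcases (hσ0 ⟨R, hRm⟩).lt_or_eq with h | h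
    · exact h
    · exfalso
      have hzero : ∀ i : Fin (min n p), ¬ (i : ℕ) < R → σ i = 0 := by
        intro i hi
        have hle : (⟨R, hRm⟩ : Fin (min n p)) ≤ i := by
          simp only [Fin.le_def]; omega
        exact le_antisymm (le_trans (hσdec _ _ hle) h.symm.le) (hσ0 i)
      set F : Matrix (Fin n) (Fin R) ℝ :=
        fun i k => σ ⟨k, lt_of_lt_of_le k.2 hRle⟩ * u ⟨k, lt_of_lt_of_le k.2 hRle⟩ i with hF
      set G : Matrix (Fin R) (Fin p) ℝ := fun k j => v ⟨k, lt_of_lt_of_le k.2 hRle⟩ j with hG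
      have hfact : M = F * G := by
        ext i j
        rw [hM]
        simp only [Matrix.sum_apply, Matrix.smul_apply, Matrix.vecMulVec_apply,
          smul_eq_mul, Matrix.mul_apply, hF, hG]
        rw [sum_restrict hRle (fun x => σ x * (u x i * v x j))
          (fun x hx => by show σ x * (u x i * v x j) = 0; rw [hzero x hx]; ring)]
        apply Finset.sum_congr rfl
        intro k _
        ring
      have h1 : M.rank ≤ R := by
        rw [hfact]
        exact le_trans (Matrix.rank_mul_le_left F G)
          (le_trans (Matrix.rank_le_card_width F) (by simp))
      omega
  refine ⟨pow_pos hσpos 2, fun A B => ?_⟩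
  -- Part 2
  set N := X * A * B with hNdef
  have hMN : X * (W₀ + A * B) - Y = M + N := by
    rw [Matrix.mul_add, ← Matrix.mul_assoc, hMdef, hNdef]
    abel
  rw [hMN]
  have hrankN : N.rank ≤ R := by
    refine le_trans (Matrix.rank_mul_le_left (X * A) B) ?_
    exact le_trans (Matrix.rank_le_card_width (X * A)) (by simp)
  set K := LinearMap.ker N.mulVecLin with hKdef
  have hK : N.rank + Module.finrank ℝ K = p := by
    have h := LinearMap.finrank_range_add_finrank_ker N.mulVecLin
    rw [Matrix.rank]
    simpa using h
  set vs : Fin (R + 1) → (Fin p → ℝ) :=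
    fun k => v ⟨k, lt_of_lt_of_le k.2 hR1⟩ with hvsdef
  have hvs : ∀ k l, vs k ⬝ᵥ vs l = if k = l then (1 : ℝ) else 0 := by
    intro k l
    rw [hvsdef]
    simp only []
    rw [hv]
    by_cases hkl : k = l
    · simp [hkl]
    · rw [if_neg hkl, if_neg]
      intro hcon
      exact hkl (by simpa [Fin.ext_iff] using hcon)
  have hindep : LinearIndependent ℝ vs := by
    rw [Fintype.linearIndependent_iff]
    intro g hg k
    have h2 := congrArg (fun w => w ⬝ᵥ vs k) hg
    simp only [sum_dotProduct', smul_dotProduct, smul_eq_mul,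
      zero_dotProduct, hvs, mul_ite, mul_one, mul_zero] at h2
    simpa using h2
  set S := Submodule.span ℝ (Set.range vs) with hSdef
  have hS : Module.finrank ℝ S = R + 1 := by
    rw [hSdef, finrank_span_eq_card hindep, Fintype.card_fin]
  have hSK : S ⊓ K ≠ ⊥ := by
    intro hbot
    have h1 := Submodule.finrank_sup_add_finrank_inf_eq S K
    rw [hbot, finrank_bot, add_zero, hS] at h1
    have h2 : Module.finrank ℝ ↥(S ⊔ K) ≤ p := by
      refine le_trans (Submodule.finrank_le _) ?_
      simp
    omega
  obtain ⟨w, hw, hw0⟩ := (Submodule.ne_bot_iff _).mp hSK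
  obtain ⟨hwS, hwK⟩ := Submodule.mem_inf.mp hw
  obtain ⟨c, hc⟩ := (Submodule.mem_span_range_iff_exists_fun ℝ).mp hwS
  have hNw : N *ᵥ w = 0 := hwK
  have hvw : ∀ k, vs k ⬝ᵥ w = c k := by
    intro k
    rw [← hc]
    rw [dotProduct_sum']
    simp only [dotProduct_smul, smul_eq_mul, hvs, mul_ite, mul_one, mul_zero]
    simp
  have hww : w ⬝ᵥ w = ∑ k, (c k) ^ 2 := by
    nth_rewrite 1 [← hc]
    rw [sum_dotProduct']
    apply Finset.sum_congr rfl
    intro k _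
    rw [smul_dotProduct, smul_eq_mul, hvw k, sq]
  have hwpos : 0 < w ⬝ᵥ w := by
    have hex : ∃ k, c k ≠ 0 := by
      by_contra hall
      push_neg at hall
      apply hw0
      rw [← hc]
      simp [hall]
    obtain ⟨k, hk⟩ := hex
    rw [hww]
    refine Finset.sum_pos' (fun l _ => sq_nonneg _) ⟨k, Finset.mem_univ k, ?_⟩
    positivity
  have hMw : M *ᵥ w = ∑ i, (σ i * (v i ⬝ᵥ w)) • u i := by
    rw [hM]
    funext i
    simp only [Matrix.mulVec, dotProduct, Matrix.sum_apply, Matrix.smul_apply,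
      Matrix.vecMulVec_apply, smul_eq_mul, Finset.sum_apply, Pi.smul_apply,
      Finset.sum_mul]
    rw [Finset.sum_comm]
    apply Finset.sum_congr rfl
    intro i' _
    rw [Finset.mul_sum, Finset.sum_mul]
    apply Finset.sum_congr rfl
    intro j _
    ring
  have hMwsq : (M *ᵥ w) ⬝ᵥ (M *ᵥ w) = ∑ i, (σ i) ^ 2 * (v i ⬝ᵥ w) ^ 2 := by
    rw [hMw, sum_dotProduct']
    apply Finset.sum_congr rfl
    intro i _
    rw [smul_dotProduct, dotProduct_sum', smul_eq_mul]
    simp only [dotProduct_smul, smul_eq_mul, hu, mul_ite, mul_one, mul_zero]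
    rw [Finset.sum_ite_eq (Finset.univ) i (fun j => σ j * (v j ⬝ᵥ w))]
    simp only [Finset.mem_univ, if_true]
    ring
  have key : (σ ⟨R, hRm⟩) ^ 2 * (w ⬝ᵥ w) ≤ frob2 (M + N) * (w ⬝ᵥ w) := by
    calc (σ ⟨R, hRm⟩) ^ 2 * (w ⬝ᵥ w)
        = ∑ k, (σ ⟨R, hRm⟩) ^ 2 * (c k) ^ 2 := by rw [hww, Finset.mul_sum]
      _ ≤ ∑ k : Fin (R + 1), (σ ⟨(k : ℕ), lt_of_lt_of_le k.2 hR1⟩) ^ 2 * (c k) ^ 2 := by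
          refine Finset.sum_le_sum fun k _ => ?_
          have h1 : σ ⟨R, hRm⟩ ≤ σ ⟨(k : ℕ), lt_of_lt_of_le k.2 hR1⟩ := by
            apply hσdec
            simp only [Fin.le_def]
            omega
          exact mul_le_mul_of_nonneg_right
            (pow_le_pow_left₀ (hσ0 _) h1 2) (sq_nonneg _)
      _ = ∑ k : Fin (R + 1), (σ ⟨(k : ℕ), lt_of_lt_of_le k.2 hR1⟩) ^ 2 *
            (v ⟨(k : ℕ), lt_of_lt_of_le k.2 hR1⟩ ⬝ᵥ w) ^ 2 := by
          apply Finset.sum_congr rfl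
          intro k _
          rw [← hvw k]
      _ ≤ ∑ i, (σ i) ^ 2 * (v i ⬝ᵥ w) ^ 2 := by
          exact sum_embed_le hR1 (fun i => (σ i) ^ 2 * (v i ⬝ᵥ w) ^ 2)
            (fun x => by positivity)
      _ = (M *ᵥ w) ⬝ᵥ (M *ᵥ w) := hMwsq.symm
      _ = ((M + N) *ᵥ w) ⬝ᵥ ((M + N) *ᵥ w) := by
          rw [Matrix.add_mulVec, hNw, add_zero]
      _ ≤ frob2 (M + N) * (w ⬝ᵥ w) := frob2_mulVec_le _ _
  exact le_of_mul_le_mul_right key hwpos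
end
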